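/- arXiv:2104.01956 — 9 statements merged into one kernel-verified Lean document; each statement's English description precedes it below -/
import Mathlib

section
/- Let G be a finite group, H₁, H₂ ≤ G, and let 𝒫 be a subgroup-closed class of groups. If χ_{H₁}(K) = χ_{H₂}(K) for every subgroup K of G lying in 𝒫, then for every subgroup K ∈ 𝒫 of G, the G-sets H₁\G and H₂\G are isomorphic as K-sets. -/
/-- The set of right cosets `H\G`. -/
abbrev RQ {G : Type*} [Group G] (H : Subgroup G) : Type _ :=
  Quotient (QuotientGroup.rightRel H)

/-- Right multiplication by `k` on the right cosets `H\G`. -/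
def rmul {G : Type*} [Group G] (H : Subgroup G) (k : G) : RQ H → RQ H :=
  Quotient.map' (· * k) (fun a b hab => by
    rw [QuotientGroup.rightRel_apply] at hab ⊢
    have : b * k * (a * k)⁻¹ = b * a⁻¹ := by group
    rw [this]; exact hab)

/-- The mark `χ_H(K)`: the number of right cosets of `H` in `G` fixed by the right
multiplication action of `K`. -/
noncomputable def chi {G : Type*} [Group G] (H K : Subgroup G) : ℕ :=
  Nat.card {x : RQ H // ∀ g : G, (Quotient.mk'' g : RQ H) = x →
    ∀ k ∈ K, (Quotient.mk'' (g * k) : RQ H) = x}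



open MulAction

section Marks

variable {K : Type*} [Group K] {X Y : Type*} [MulAction K X] [MulAction K Y]

lemma mem_fp_iff (L : Subgroup K) (x : X) :
    x ∈ fixedPoints L X ↔ ∀ l ∈ L, l • x = x := by
  constructor
  · intro h l hl; exact h ⟨l, hl⟩
  · intro h l; exact h l l.2

lemma fp_bot (X : Type*) [MulAction K X] :
    fixedPoints (⊥ : Subgroup K) X = Set.univ := by
  ext x
  simp only [Set.mem_univ, iff_true, mem_fp_iff]
  rintro l hl
  rw [Subgroup.mem_bot] at hl
  subst hl
  exact one_smul K x

/-- Equivariant equivalences preserve fixed points of subgroups. -/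
def fpCongr (L : Subgroup K) (e : X ≃ Y) (he : ∀ (k : K) (x : X), e (k • x) = k • e x) :
    fixedPoints L X ≃ fixedPoints L Y :=
  Equiv.subtypeEquiv e (fun x => by
    simp only [mem_fp_iff]
    constructor
    · intro h l hl; rw [← he, h l hl]
    · intro h l hl; apply e.injective; rw [he, h l hl])

lemma orbitEquiv_symm_equivariant (x : X) (k : K) (q : K ⧸ stabilizer K x) :
    (orbitEquivQuotientStabilizer K x).symm (k • q)
      = k • (orbitEquivQuotientStabilizer K x).symm q := by
  induction q using QuotientGroup.induction_on with
  | _ g =>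
    apply Subtype.ext
    rw [MulAction.Quotient.smul_coe]
    rw [orbit.coe_smul]
    rw [orbitEquivQuotientStabilizer_symm_apply, orbitEquivQuotientStabilizer_symm_apply,
      smul_eq_mul, mul_smul]

lemma orbitEquiv_equivariant (x : X) (k : K) (z : orbit K x) :
    orbitEquivQuotientStabilizer K x (k • z) = k • orbitEquivQuotientStabilizer K x z := by
  apply (orbitEquivQuotientStabilizer K x).symm.injective
  rw [Equiv.symm_apply_apply, orbitEquiv_symm_equivariant, Equiv.symm_apply_apply]

lemma qeqCongr_equivariant {L M : Subgroup K} (h : L = M) (k : K) (q : K ⧸ L) :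
    Subgroup.quotientEquivOfEq h (k • q) = k • Subgroup.quotientEquivOfEq h q := by
  induction q using QuotientGroup.induction_on with
  | _ g =>
    rw [MulAction.Quotient.smul_coe, Subgroup.quotientEquivOfEq_mk,
      Subgroup.quotientEquivOfEq_mk, MulAction.Quotient.smul_coe]

/-- An equivariant equivalence between two orbits whose base points have equal stabilizers. -/
noncomputable def orbitCongr (x : X) (y : Y) (h : stabilizer K x = stabilizer K y) :
    orbit K x ≃ orbit K y :=
  (orbitEquivQuotientStabilizer K x).trans
    ((Subgroup.quotientEquivOfEq h).trans (orbitEquivQuotientStabilizer K y).symm)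

lemma orbitCongr_equivariant (x : X) (y : Y) (h : stabilizer K x = stabilizer K y)
    (k : K) (z : orbit K x) :
    orbitCongr x y h (k • z) = k • orbitCongr x y h z := by
  unfold orbitCongr
  simp only [Equiv.trans_apply]
  rw [orbitEquiv_equivariant, qeqCongr_equivariant, orbitEquiv_symm_equivariant]

/-- The complement of an orbit as a sub-action. -/
@[reducible] def orbitComplS (x : X) : SubMulAction K X where
  carrier := (orbit K x)ᶜ
  smul_mem' := fun k {z} hz => fun hmem => hz (by
    obtain ⟨g, hg⟩ := hmem
    have hg' : g • x = k • z := hg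
    refine ⟨k⁻¹ * g, ?_⟩
    show (k⁻¹ * g) • x = z
    rw [mul_smul, hg', inv_smul_smul])

/-- Fixed points of a sub-action correspond to fixed points in the carrier set. -/
def fpSub (L : Subgroup K) (p : SubMulAction K X) :
    fixedPoints L ↥p ≃ ↥(fixedPoints L X ∩ ↑p) where
  toFun z := ⟨z.1.1, ⟨fun l => by
      have h2 := congrArg Subtype.val (z.2 l)
      rw [Subgroup.smul_def, SubMulAction.val_smul] at h2
      exact h2, z.1.2⟩⟩
  invFun z := ⟨⟨z.1, z.2.2⟩, fun l => Subtype.ext (by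
      rw [Subgroup.smul_def, SubMulAction.val_smul]
      exact z.2.1 l)⟩
  left_inv z := rfl
  right_inv z := rfl

/-- Fixed points of a sub-action correspond to fixed points in the carrier set. -/
def fpSet (L : Subgroup K) (s : Set X) [MulAction K ↥s]
    (hcoe : ∀ (k : K) (z : ↥s), ((k • z : ↥s) : X) = k • (z : X)) :
    fixedPoints L ↥s ≃ ↥(fixedPoints L X ∩ s) where
  toFun z := ⟨z.1.1, ⟨fun l => by
      have h2 := congrArg Subtype.val (z.2 l)
      rw [Subgroup.smul_def, hcoe] at h2
      exact h2, z.1.2⟩⟩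
  invFun z := ⟨⟨z.1, z.2.2⟩, fun l => Subtype.ext (by
      rw [Subgroup.smul_def, hcoe]
      exact z.2.1 l)⟩
  left_inv z := rfl
  right_inv z := rfl

lemma card_fp_split (L : Subgroup K) (x : X) [Finite X] :
    Nat.card (fixedPoints L X) =
      Nat.card (↥(fixedPoints L X ∩ orbit K x))
        + Nat.card (↥(fixedPoints L X ∩ (orbit K x)ᶜ)) := by
  classical
  have hU : fixedPoints L X
      = (fixedPoints L X ∩ orbit K x) ∪ (fixedPoints L X ∩ (orbit K x)ᶜ) := by
    rw [← Set.inter_union_distrib_left, Set.union_compl_self, Set.inter_univ]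
  have hdis : Disjoint (fixedPoints L X ∩ orbit K x) (fixedPoints L X ∩ (orbit K x)ᶜ) :=
    (disjoint_compl_right (a := orbit K x)).mono Set.inter_subset_right Set.inter_subset_right
  rw [Nat.card_congr (Equiv.setCongr hU), Nat.card_congr (Equiv.Set.union hdis), Nat.card_sum]

theorem marks_main {K : Type} [Group K] [Finite K] (n : ℕ) :
    ∀ (X Y : Type) [MulAction K X] [MulAction K Y] [Finite X] [Finite Y],
      Nat.card X = n →
      (∀ L : Subgroup K, Nat.card (fixedPoints L X) = Nat.card (fixedPoints L Y)) →
      ∃ e : X ≃ Y, ∀ (k : K) (x : X), e (k • x) = k • e x := by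
  have : Finite (Subgroup K) := Finite.of_injective _ SetLike.coe_injective
  induction n using Nat.strong_induction_on with
  | _ n ih =>
    intro X Y _ _ _ _ hn hfp
    classical
    rcases Nat.eq_zero_or_pos n with h0 | hpos
    · subst h0
      have hX : IsEmpty X := by
        rcases Nat.card_eq_zero.mp hn with h | h
        · exact h
        · exact absurd h (not_infinite_iff_finite.mpr ‹_›)
      have hY : IsEmpty Y := by
        have h1 := hfp ⊥
        rw [fp_bot, fp_bot, Nat.card_congr (Equiv.Set.univ X),
          Nat.card_congr (Equiv.Set.univ Y), hn] at h1
        exact (Nat.card_eq_zero.mp h1.symm).resolve_right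
          (not_infinite_iff_finite.mpr ‹_›)
      exact ⟨Equiv.equivOfIsEmpty X Y, fun k x => (hX.false x).elim⟩
    · have hXne : Nonempty X := (Nat.card_pos_iff.mp (by rw [hn]; exact hpos)).1
      set S : Set (Subgroup K) := {L | (fixedPoints L X).Nonempty} with hS
      have hSne : S.Nonempty := ⟨⊥, by
        rw [Set.mem_setOf_eq, fp_bot]
        exact Set.univ_nonempty⟩
      obtain ⟨L, hLS, hLmax⟩ := Set.exists_max_image S (fun L => Nat.card L)
        (Set.toFinite S) hSne
      obtain ⟨x, hx⟩ := hLS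
      -- stabilizer of x is L
      have hstabx : stabilizer K x = L := by
        have h1 : L ≤ stabilizer K x := fun l hl => mem_stabilizer_iff.mpr (hx ⟨l, hl⟩)
        refine (Subgroup.eq_of_le_of_card_ge h1 ?_).symm
        exact hLmax _ ⟨x, fun l => mem_stabilizer_iff.mp l.2⟩
      -- find y in Y with the same stabilizer
      have hfyne : (fixedPoints L Y).Nonempty := by
        have h1 : 0 < Nat.card (fixedPoints L X) :=
          Nat.card_pos_iff.mpr ⟨⟨x, hx⟩, Set.toFinite _⟩
        rw [hfp L] at h1
        obtain ⟨⟨y, hy⟩, -⟩ := Nat.card_pos_iff.mp h1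
        exact ⟨y, hy⟩
      obtain ⟨y, hy⟩ := hfyne
      have hstaby : stabilizer K y = L := by
        have h1 : L ≤ stabilizer K y := fun l hl => mem_stabilizer_iff.mpr (hy ⟨l, hl⟩)
        refine (Subgroup.eq_of_le_of_card_ge h1 ?_).symm
        apply hLmax
        rw [hS, Set.mem_setOf_eq]
        have h2 : 0 < Nat.card (fixedPoints (stabilizer K y) Y) :=
          Nat.card_pos_iff.mpr ⟨⟨y, fun l => mem_stabilizer_iff.mp l.2⟩, Set.toFinite _⟩
        rw [← hfp] at h2
        obtain ⟨⟨z, hz⟩, -⟩ := Nat.card_pos_iff.mp h2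
        exact ⟨z, hz⟩
      -- equivariant equivalence of orbits
      have hstabeq : stabilizer K x = stabilizer K y := hstabx.trans hstaby.symm
      set eo : orbit K x ≃ orbit K y := orbitCongr x y hstabeq with heo
      have heoeq : ∀ (k : K) (z : orbit K x), eo (k • z) = k • eo z :=
        orbitCongr_equivariant x y hstabeq
      -- complements
      set cX : SubMulAction K X := orbitComplS x with hcX
      set cY : SubMulAction K Y := orbitComplS y with hcY
      have hcoeX : ∀ (k : K) (z : ↥cX), ((k • z : ↥cX) : X) = k • (z : X) := fun _ _ => rfl
      have hcoeY : ∀ (k : K) (z : ↥cY), ((k • z : ↥cY) : Y) = k • (z : Y) := fun _ _ => rfl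
      have hcXset : (cX : Set X) = (orbit K x)ᶜ := rfl
      have hcYset : (cY : Set Y) = (orbit K y)ᶜ := rfl
      -- fixed point counts for complements agree
      have hfpc : ∀ L' : Subgroup K,
          Nat.card (fixedPoints L' ↥cX) = Nat.card (fixedPoints L' ↥cY) := by
        intro L'
        have e1 : Nat.card (fixedPoints L' ↥cX)
            = Nat.card (↥(fixedPoints L' X ∩ (orbit K x)ᶜ)) :=
          Nat.card_congr (fpSub L' cX)
        have e2 : Nat.card (fixedPoints L' ↥cY)
            = Nat.card (↥(fixedPoints L' Y ∩ (orbit K y)ᶜ)) :=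
          Nat.card_congr (fpSub L' cY)
        have e3 : Nat.card (fixedPoints L' ↥(orbit K x))
            = Nat.card (↥(fixedPoints L' X ∩ orbit K x)) :=
          Nat.card_congr (fpSet L' (orbit K x) (fun _ _ => rfl))
        have e4 : Nat.card (fixedPoints L' ↥(orbit K y))
            = Nat.card (↥(fixedPoints L' Y ∩ orbit K y)) :=
          Nat.card_congr (fpSet L' (orbit K y) (fun _ _ => rfl))
        have e5 : Nat.card (fixedPoints L' ↥(orbit K x))
            = Nat.card (fixedPoints L' ↥(orbit K y)) :=
          Nat.card_congr (fpCongr L' eo heoeq)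
        have e6 := card_fp_split L' x (X := X)
        have e7 := card_fp_split L' y (X := Y)
        have e8 := hfp L'
        omega
      -- cardinality decreases
      have hsplit : Nat.card X = Nat.card (orbit K x) + Nat.card ↥cX := by
        have e : X ≃ (↥(orbit K x)) ⊕ (↥cX) := (Equiv.sumCompl (· ∈ orbit K x)).symm
        rw [Nat.card_congr e, Nat.card_sum]
      have horbpos : 0 < Nat.card (orbit K x) :=
        Nat.card_pos_iff.mpr ⟨⟨x, mem_orbit_self x⟩, Set.toFinite _⟩
      have hlt : Nat.card ↥cX < n := by omega
      obtain ⟨e', he'⟩ := ih (Nat.card ↥cX) hlt ↥cX ↥cY rfl hfpc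
      -- assemble the final equivalence
      refine ⟨((Equiv.sumCompl (· ∈ orbit K x)).symm.trans
        ((Equiv.sumCongr eo e').trans (Equiv.sumCompl (· ∈ orbit K y)))), ?_⟩
      intro k z
      have hmemiff : ∀ w : X, k • w ∈ orbit K x ↔ w ∈ orbit K x := by
        intro w
        constructor
        · intro hmem
          obtain ⟨g, hg⟩ := hmem
          have hg' : g • x = k • w := hg
          refine ⟨k⁻¹ * g, ?_⟩
          show (k⁻¹ * g) • x = w
          rw [mul_smul, hg', inv_smul_smul]
        · intro hmem
          obtain ⟨g, hg⟩ := hmem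
          have hg' : g • x = w := hg
          refine ⟨k * g, ?_⟩
          show (k * g) • x = k • w
          rw [mul_smul, hg']
      by_cases h : z ∈ orbit K x
      · have h' : k • z ∈ orbit K x := (hmemiff z).mpr h
        simp only [Equiv.trans_apply, Equiv.sumCompl_symm_apply_of_pos h,
          Equiv.sumCompl_symm_apply_of_pos h', Equiv.sumCongr_apply, Sum.map_inl,
          Equiv.sumCompl_apply_inl]
        have hzz : (⟨k • z, h'⟩ : orbit K x) = k • (⟨z, h⟩ : orbit K x) := rfl
        rw [hzz]
        show ((Equiv.sumCompl (· ∈ orbit K y)) (Sum.inl (eo (k • ⟨z, h⟩))) : Y)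
          = k • (Equiv.sumCompl (· ∈ orbit K y)) (Sum.inl (eo ⟨z, h⟩))
        rw [heoeq]
        rfl
      · have h' : k • z ∉ orbit K x := fun hc => h ((hmemiff z).mp hc)
        simp only [Equiv.trans_apply, Equiv.sumCompl_symm_apply_of_neg h,
          Equiv.sumCompl_symm_apply_of_neg h', Equiv.sumCongr_apply, Sum.map_inr,
          Equiv.sumCompl_apply_inr]
        have hzz : (⟨k • z, h'⟩ : {a : X // ¬a ∈ orbit K x}) = k • (⟨z, h⟩ : ↥cX) := rfl
        rw [hzz]
        show ((Equiv.sumCompl (· ∈ orbit K y)) (Sum.inr (e' (k • ⟨z, h⟩))) : Y)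
          = k • (Equiv.sumCompl (· ∈ orbit K y)) (Sum.inr (e' ⟨z, h⟩))
        rw [he']
        rfl

end Marks

section Application

variable {G : Type} [Group G]

/-- The right-multiplication action of `G` on `H\G`, written as a left action via inverses. -/
def rqAction (H : Subgroup G) : MulAction G (RQ H) where
  smul g x := rmul H g⁻¹ x
  one_smul x := Quotient.inductionOn' x (fun a => by
    show rmul H 1⁻¹ (Quotient.mk'' a) = Quotient.mk'' a
    show Quotient.mk'' (a * 1⁻¹) = Quotient.mk'' a
    rw [inv_one, mul_one])
  mul_smul g h x := Quotient.inductionOn' x (fun a => by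
    show rmul H (g * h)⁻¹ (Quotient.mk'' a) = rmul H g⁻¹ (rmul H h⁻¹ (Quotient.mk'' a))
    show Quotient.mk'' (a * (g * h)⁻¹) = Quotient.mk'' ((a * h⁻¹) * g⁻¹)
    rw [mul_inv_rev, mul_assoc])

lemma chi_eq_card_fp (H : Subgroup G) [MulAction G (RQ H)]
    (hsmul : ∀ (g : G) (x : RQ H), g • x = rmul H g⁻¹ x) (M : Subgroup G) :
    chi H M = Nat.card (MulAction.fixedPoints M (RQ H)) := by
  apply Nat.card_congr
  apply Equiv.subtypeEquivRight
  intro x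
  constructor
  · intro hx m
    induction x using Quotient.inductionOn' with
    | h g =>
      rw [Subgroup.smul_def, hsmul]
      exact hx g rfl (↑m)⁻¹ (inv_mem m.2)
  · intro hx g hg k hk
    have h1 := hx ⟨k⁻¹, inv_mem hk⟩
    rw [Subgroup.smul_def, hsmul, inv_inv] at h1
    rw [← hg] at h1 ⊢
    exact h1

lemma fp_map_subtype {X : Type} [MulAction G X] (K : Subgroup G) (L : Subgroup ↥K) :
    MulAction.fixedPoints L X = MulAction.fixedPoints (L.map K.subtype) X := by
  ext x
  rw [mem_fp_iff, mem_fp_iff]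
  constructor
  · intro h m hm
    obtain ⟨l, hl, rfl⟩ := hm
    have h2 := h l hl
    rw [Subgroup.smul_def] at h2
    exact h2
  · intro h l hl
    rw [Subgroup.smul_def]
    exact h ↑l (Subgroup.mem_map.mpr ⟨l, hl, rfl⟩)

end Application

/-- Let `𝒫` be a subgroup-closed class of groups (closed under isomorphism and passing to
subgroups).  If `χ_{H₁}(K) = χ_{H₂}(K)` for every subgroup `K` of `G` in the class `𝒫`, then
for every subgroup `K` of `G` in `𝒫` the `G`-sets `H₁\G` and `H₂\G` are isomorphic as
`K`-sets. -/
theorem rq_isomorphic_as_Ksets_of_chi_eq {G : Type} [Group G] [Fintype G]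
    (P : ∀ (Γ : Type) [Group Γ], Prop)
    (Piso : ∀ (Γ₁ Γ₂ : Type) [Group Γ₁] [Group Γ₂], (Γ₁ ≃* Γ₂) → P Γ₁ → P Γ₂)
    (Psub : ∀ (Γ : Type) [Group Γ] (Δ : Subgroup Γ), P Γ → P Δ)
    (H₁ H₂ : Subgroup G)
    (hchi : ∀ K : Subgroup G, P K → chi H₁ K = chi H₂ K)
    (K : Subgroup G) (hK : P K) :
    ∃ e : RQ H₁ ≃ RQ H₂, ∀ k ∈ K, ∀ x : RQ H₁, e (rmul H₁ k x) = rmul H₂ k (e x) := by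
  classical
  letI iG1 : MulAction G (RQ H₁) := rqAction H₁
  letI iG2 : MulAction G (RQ H₂) := rqAction H₂
  have hs1 : ∀ (g : G) (x : RQ H₁), g • x = rmul H₁ g⁻¹ x := fun _ _ => rfl
  have hs2 : ∀ (g : G) (x : RQ H₂), g • x = rmul H₂ g⁻¹ x := fun _ _ => rfl
  have hfp : ∀ L : Subgroup ↥K,
      Nat.card (MulAction.fixedPoints L (RQ H₁))
        = Nat.card (MulAction.fixedPoints L (RQ H₂)) := by
    intro L
    have hPL : P ↥L := Psub ↥K L hK
    have hPM : P ↥(L.map K.subtype) :=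
      Piso _ _ (Subgroup.equivMapOfInjective L K.subtype K.subtype_injective) hPL
    have h := hchi (L.map K.subtype) hPM
    rw [chi_eq_card_fp H₁ hs1 _, chi_eq_card_fp H₂ hs2 _] at h
    rw [fp_map_subtype K L (X := RQ H₁), fp_map_subtype K L (X := RQ H₂)]
    exact h
  obtain ⟨e, he⟩ := marks_main (K := ↥K) (Nat.card (RQ H₁)) (RQ H₁) (RQ H₂) rfl hfp
  refine ⟨e, fun k hk x => ?_⟩
  have h2 : e (rmul H₁ k⁻¹⁻¹ x) = rmul H₂ k⁻¹⁻¹ (e x) := he ⟨k⁻¹, inv_mem hk⟩ x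
  rwa [inv_inv] at h2
end

section
/- Two finite groups H₁ and H₂ of the same order can be embedded as subgroups of a common finite group G such that there is a G-conjugacy-class-preserving bijection between the cyclic subgroups of H₁ and the cyclic subgroups of H₂ if and only if H₁ and H₂ have the same order statistics, i.e., for every n the number of elements of order n in H₁ equals that in H₂. -/
open Subgroup

/-- Decompose a finite set with a free order-`d` permutation into blocks. -/
private lemma free_decomp {X : Type} [Finite X] (d : ℕ) (hd : 0 < d) (σ : Equiv.Perm X)
    (hσd : σ ^ d = 1) (hσ : ∀ (x : X) (k : ℕ), (σ ^ k) x = x → d ∣ k) :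
    ∃ (Q : Type) (_ : Finite Q) (F : Q × ZMod d ≃ X),
      (∀ q k, F (q, k + 1) = σ (F (q, k))) ∧ Nat.card X = Nat.card Q * d := by
  haveI : NeZero d := ⟨hd.ne'⟩
  have hpow : ∀ a : ℕ, σ ^ (a % d) = σ ^ a := by
    intro a
    conv_rhs => rw [← Nat.div_add_mod a d]
    rw [pow_add, pow_mul, hσd, one_pow, one_mul]
  have hcast : ∀ (a : ZMod d) (m : ℕ), (m : ZMod d) = a → σ ^ a.val = σ ^ m := by
    intro a m hm
    rw [← hm, ZMod.val_natCast, hpow]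
  let s : Setoid X :=
    { r := fun x y => ∃ k : ℕ, (σ ^ k) x = y
      iseqv := by
        refine ⟨fun x => ⟨0, rfl⟩, ?_, ?_⟩
        · rintro x y ⟨k, rfl⟩
          exact ⟨(d - 1) * k, by
            rw [← Equiv.Perm.mul_apply, ← pow_add]
            rw [Nat.sub_one_mul, Nat.sub_add_cancel (Nat.le_mul_of_pos_left k hd), pow_mul, hσd, one_pow, Equiv.Perm.one_apply]⟩
        · rintro x y z ⟨k, rfl⟩ ⟨j, rfl⟩
          exact ⟨j + k, by rw [pow_add, Equiv.Perm.mul_apply]⟩ }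
  let Q := Quotient s
  refine ⟨Q, Quotient.finite s, ?_⟩
  have hΨbij : Function.Bijective (fun p : Q × ZMod d => (σ ^ (p.2.val)) p.1.out) := by
    constructor
    · rintro ⟨q, k⟩ ⟨r, j⟩ h
      simp only at h
      have hqr : q = r := by
        have : s.r q.out r.out := by
          refine ⟨(d - 1) * j.val + k.val, ?_⟩
          have : (σ ^ ((d - 1) * j.val)) ((σ ^ j.val) r.out) = r.out := by
            rw [← Equiv.Perm.mul_apply, ← pow_add]
            rw [Nat.sub_one_mul, Nat.sub_add_cancel (Nat.le_mul_of_pos_left j.val hd), pow_mul, hσd, one_pow, Equiv.Perm.one_apply]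
          rw [pow_add, Equiv.Perm.mul_apply, h, this]
        exact Quotient.out_equiv_out.mp this
      subst hqr
      have hkj : (σ ^ ((d - 1) * j.val + k.val)) q.out = q.out := by
        rw [pow_add, Equiv.Perm.mul_apply, h, ← Equiv.Perm.mul_apply, ← pow_add]
        rw [Nat.sub_one_mul, Nat.sub_add_cancel (Nat.le_mul_of_pos_left j.val hd), pow_mul, hσd, one_pow, Equiv.Perm.one_apply]
      have hdvd : d ∣ (d - 1) * j.val + k.val := hσ _ _ hkj
      have : (((d - 1) * j.val + k.val : ℕ) : ZMod d) = 0 :=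
        (ZMod.natCast_eq_zero_iff _ _).mpr hdvd
      have hd1 : ((d - 1 : ℕ) : ZMod d) = -1 := by
        have : ((d - 1 : ℕ) : ZMod d) + 1 = 0 := by
          have : ((d - 1 : ℕ) : ZMod d) + ((1 : ℕ) : ZMod d) = ((d - 1 + 1 : ℕ) : ZMod d) := by
            push_cast; ring
          rw [show ((1:ℕ) : ZMod d) = 1 by push_cast; ring] at this
          rw [this, Nat.sub_add_cancel hd, ZMod.natCast_self]
        linear_combination this
      have hkj' : k = j := by
        push_cast at this
        rw [hd1, ZMod.natCast_zmod_val, ZMod.natCast_zmod_val] at this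
        linear_combination this
      rw [hkj']
    · intro x
      obtain ⟨k, hk⟩ : s.r (⟦x⟧ : Q).out x := Quotient.mk_out x
      refine ⟨⟨⟦x⟧, (k : ZMod d)⟩, ?_⟩
      show (σ ^ ((k : ZMod d)).val) (⟦x⟧ : Q).out = x
      rw [hcast _ k rfl, hk]
  let F := Equiv.ofBijective _ hΨbij
  refine ⟨F, ?_, ?_⟩
  · intro q k
    show (σ ^ ((k+1).val)) q.out = σ ((σ ^ k.val) q.out)
    have : ((k.val + 1 : ℕ) : ZMod d) = k + 1 := by
      push_cast
      rw [ZMod.natCast_zmod_val]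
    rw [hcast (k+1) (k.val + 1) this, pow_succ', Equiv.Perm.mul_apply]
  · rw [← Nat.card_congr F, Nat.card_prod, Nat.card_zmod]

private lemma exists_conj_of_free {X : Type} [Finite X] (d : ℕ) (hd : 0 < d)
    (σ τ : Equiv.Perm X) (hσd : σ ^ d = 1) (hτd : τ ^ d = 1)
    (hσ : ∀ (x : X) (k : ℕ), (σ ^ k) x = x → d ∣ k)
    (hτ : ∀ (y : X) (k : ℕ), (τ ^ k) y = y → d ∣ k) :
    ∃ π : Equiv.Perm X, π * σ * π⁻¹ = τ := by
  obtain ⟨Q₁, hQ₁, F₁, hF₁, hc₁⟩ := free_decomp d hd σ hσd hσ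
  obtain ⟨Q₂, hQ₂, F₂, hF₂, hc₂⟩ := free_decomp d hd τ hτd hτ
  have hq : Nat.card Q₁ = Nat.card Q₂ :=
    Nat.eq_of_mul_eq_mul_right hd (hc₁.symm.trans hc₂)
  obtain ⟨e⟩ : Nonempty (Q₁ ≃ Q₂) := by
    haveI := Fintype.ofFinite Q₁; haveI := Fintype.ofFinite Q₂
    rw [Nat.card_eq_fintype_card, Nat.card_eq_fintype_card] at hq
    exact ⟨Fintype.equivOfCardEq hq⟩
  let π : Equiv.Perm X := F₁.symm.trans ((Equiv.prodCongr e (Equiv.refl (ZMod d))).trans F₂)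
  have key : ∀ x, π (σ x) = τ (π x) := by
    intro x
    obtain ⟨⟨q, k⟩, rfl⟩ : ∃ p, F₁ p = x := ⟨F₁.symm x, F₁.apply_symm_apply x⟩
    have h1 : σ (F₁ (q, k)) = F₁ (q, k + 1) := (hF₁ q k).symm
    have h2 : π (F₁ (q, k)) = F₂ (e q, k) := by
      simp [π]
    have h3 : π (F₁ (q, k + 1)) = F₂ (e q, k + 1) := by
      simp [π]
    rw [h1, h2, h3, hF₂]
  refine ⟨π, ?_⟩
  ext y
  have := key (π⁻¹ y)
  simp only [show π (π⁻¹ y) = y from π.apply_symm_apply y, Equiv.Perm.inv_def] at this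
  simp [Equiv.Perm.mul_apply, this]

private lemma isCyclic_zpowers {G : Type} [Group G] (x : G) : IsCyclic (Subgroup.zpowers x) := by
  refine ⟨⟨x, mem_zpowers x⟩, ?_⟩
  rintro ⟨y, hy⟩
  obtain ⟨k, hk⟩ := mem_zpowers_iff.mp hy
  exact mem_zpowers_iff.mpr ⟨k, by ext; simpa using hk⟩

private lemma exists_gen {G : Type} [Group G] [Finite G] (K : Subgroup G) (h : IsCyclic K) :
    ∃ x : G, x ∈ K ∧ Subgroup.zpowers x = K ∧ orderOf x = Nat.card K := by
  obtain ⟨g, hg⟩ := h.exists_generator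
  haveI := Fintype.ofFinite K
  refine ⟨g.1, g.2, ?_, ?_⟩
  · apply le_antisymm (zpowers_le.mpr g.2)
    intro y hy
    obtain ⟨k, hk⟩ := mem_zpowers_iff.mp (hg ⟨y, hy⟩)
    exact mem_zpowers_iff.mpr ⟨k, by simpa using congrArg Subtype.val hk⟩
  · rw [Subgroup.orderOf_coe g, orderOf_eq_card_of_forall_mem_zpowers hg,
      Nat.card_eq_fintype_card]

private lemma card_map_conj {G : Type} [Group G] (g : G) (K : Subgroup G) :
    Nat.card (Subgroup.map (MulAut.conj g).toMonoidHom K) = Nat.card K :=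
  (Nat.card_congr (Subgroup.equivMapOfInjective K _ (MulAut.conj g).injective).toEquiv).symm

private lemma count_range {H G : Type} [Group H] [Group G] (f : H →* G)
    (hf : Function.Injective f) (n : ℕ) :
    Nat.card {x : H // orderOf x = n} = Nat.card {x : G // x ∈ f.range ∧ orderOf x = n} := by
  apply Nat.card_congr
  refine Equiv.ofBijective
    (fun x => ⟨f x.1, ⟨x.1, rfl⟩, by rw [orderOf_injective f hf, x.2]⟩) ⟨?_, ?_⟩
  · intro a b h
    exact Subtype.ext (hf (congrArg Subtype.val h))
  · rintro ⟨y, ⟨x, rfl⟩, hy⟩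
    exact ⟨⟨x, by rw [← orderOf_injective f hf, hy]⟩, Subtype.ext rfl⟩

private lemma count_elements_eq {G : Type} [Group G] [Finite G] (R : Subgroup G) (n : ℕ)
    (hn : n ≠ 0) :
    Nat.card {x : G // x ∈ R ∧ orderOf x = n} =
      n.totient * Nat.card {K : Subgroup G // K ≤ R ∧ IsCyclic K ∧ Nat.card K = n} := by
  classical
  haveI := Fintype.ofFinite G
  haveI : Fintype (Subgroup G) := Fintype.ofFinite _
  rw [Nat.card_eq_fintype_card, Nat.card_eq_fintype_card, Fintype.card_subtype,
    Fintype.card_subtype]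
  have hmaps : ∀ x ∈ Finset.univ.filter (fun x : G => x ∈ R ∧ orderOf x = n),
      Subgroup.zpowers x ∈ Finset.univ.filter
        (fun K : Subgroup G => K ≤ R ∧ IsCyclic K ∧ Nat.card K = n) := by
    intro x hx
    simp only [Finset.mem_filter, Finset.mem_univ, true_and] at hx ⊢
    exact ⟨zpowers_le.mpr hx.1, _root_.isCyclic_zpowers x, by rw [Nat.card_zpowers, hx.2]⟩
  rw [Finset.card_eq_sum_card_fiberwise hmaps]
  rw [Finset.sum_congr rfl (g := fun _ => n.totient) ?_, Finset.sum_const, smul_eq_mul, mul_comm]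
  intro K hK
  simp only [Finset.mem_filter, Finset.mem_univ, true_and] at hK
  obtain ⟨hKR, hKcyc, hKcard⟩ := hK
  haveI := Fintype.ofFinite K
  haveI : IsCyclic K := hKcyc
  have hcard : Fintype.card K = n := by rw [← Nat.card_eq_fintype_card, hKcard]
  have htot := IsCyclic.card_orderOf_eq_totient (α := K) (d := n) (by rw [hcard])
  rw [← htot]
  apply Finset.card_bij (fun (x : G) _ => (⟨x, by
      rename_i hx
      simp only [Finset.mem_filter, Finset.mem_univ, true_and] at hx
      rw [← hx.2]; exact mem_zpowers x⟩ : K))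
  · intro x hx
    simp only [Finset.mem_filter, Finset.mem_univ, true_and] at hx ⊢
    rw [Subgroup.orderOf_mk]
    exact hx.1.2
  · intro a ha b hb h
    exact congrArg Subtype.val h
  · intro y hy
    simp only [Finset.mem_filter, Finset.mem_univ, true_and] at hy
    refine ⟨y.1, ?_, ?_⟩
    · simp only [Finset.mem_filter, Finset.mem_univ, true_and]
      have hyo : orderOf (y.1 : G) = n := by rw [Subgroup.orderOf_coe, hy]
      refine ⟨⟨hKR y.2, hyo⟩, ?_⟩
      apply Subgroup.eq_of_le_of_card_ge (zpowers_le.mpr y.2)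
      rw [Nat.card_zpowers, hyo, hKcard]
    · exact Subtype.ext rfl


/-- An embedding of two finite groups `H₁, H₂` into a common finite group `G` together with
a `G`-conjugacy-class-preserving bijection between the cyclic subgroups of (the image of)
`H₁` and those of (the image of) `H₂`. -/
structure CyclicMatchedEmbedding (H₁ H₂ : Type) [Group H₁] [Group H₂] : Type 1 where
  G : Type
  [grp : Group G]
  [fin : Finite G]
  f₁ : H₁ →* G
  f₂ : H₂ →* G
  inj₁ : Function.Injective f₁
  inj₂ : Function.Injective f₂
  b : {K : Subgroup G // K ≤ f₁.range ∧ IsCyclic K} ≃ {K : Subgroup G // K ≤ f₂.range ∧ IsCyclic K}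
  conj : ∀ K, ∃ g : G, Subgroup.map (MulAut.conj g).toMonoidHom K.1 = (b K).1

/-- Two finite groups `H₁`, `H₂` of the same order can be embedded as subgroups of a common
finite group `G` with a `G`-conjugacy-class-preserving bijection between the cyclic subgroups
of `H₁` and those of `H₂` if and only if `H₁` and `H₂` have the same order statistics: for
every `n`, the number of elements of order `n` in `H₁` equals that in `H₂`. -/
theorem embeddable_with_cyclic_matching_iff_order_statistics
    {H₁ H₂ : Type} [Group H₁] [Group H₂] [Finite H₁] [Finite H₂]
    (hcard : Nat.card H₁ = Nat.card H₂) :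
    Nonempty (CyclicMatchedEmbedding H₁ H₂) ↔
      ∀ n : ℕ, Nat.card {x : H₁ // orderOf x = n} = Nat.card {x : H₂ // orderOf x = n} := by
  constructor
  · rintro ⟨⟨G, f₁, f₂, inj₁, inj₂, b, conj⟩⟩ n
    rename_i grp fin
    rcases eq_or_ne n 0 with rfl | hn
    · haveI : IsEmpty {x : H₁ // orderOf x = 0} :=
        ⟨fun x => (orderOf_pos x.1).ne' x.2⟩
      haveI : IsEmpty {x : H₂ // orderOf x = 0} :=
        ⟨fun x => (orderOf_pos x.1).ne' x.2⟩
      rw [Nat.card_of_isEmpty, Nat.card_of_isEmpty]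
    · rw [count_range f₁ inj₁, count_range f₂ inj₂,
        count_elements_eq _ _ hn, count_elements_eq _ _ hn]
      congr 1
      have hbcard : ∀ K, Nat.card (b K).1 = Nat.card K.1 := by
        intro K
        obtain ⟨g, hg⟩ := conj K
        rw [← hg, card_map_conj]
      apply Nat.card_congr
      refine Equiv.ofBijective (fun K =>
        ⟨(b ⟨K.1, K.2.1, K.2.2.1⟩).1, (b _).2.1, (b _).2.2, by
          rw [hbcard]; exact K.2.2.2⟩) ⟨?_, ?_⟩
      · intro a c h
        have h' := congrArg Subtype.val h
        dsimp only at h'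
        have h2 := b.injective (Subtype.ext h')
        have h3 := congrArg Subtype.val h2
        dsimp only at h3
        exact Subtype.ext h3
      · rintro ⟨K', hK'R, hK'cyc, hK'card⟩
        set L := b.symm ⟨K', hK'R, hK'cyc⟩ with hL
        have hbL : b L = ⟨K', hK'R, hK'cyc⟩ := b.apply_symm_apply _
        have hLcard : Nat.card L.1 = n := by
          have := hbcard L
          rw [hbL] at this
          rw [← this, hK'card]
        refine ⟨⟨L.1, L.2.1, L.2.2, hLcard⟩, ?_⟩
        apply Subtype.ext
        show (b ⟨L.1, L.2.1, L.2.2⟩).1 = K'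
        have hLL : (⟨L.1, L.2.1, L.2.2⟩ : {K : Subgroup G // K ≤ f₁.range ∧ IsCyclic K}) = L :=
          Subtype.ext rfl
        rw [hLL, hbL]
  · intro hstat
    haveI := Fintype.ofFinite H₁
    haveI := Fintype.ofFinite H₂
    have ecard : Fintype.card H₂ = Fintype.card H₁ := by
      rw [← Nat.card_eq_fintype_card, ← Nat.card_eq_fintype_card, hcard]
    let e : H₂ ≃ H₁ := Fintype.equivOfCardEq ecard
    let f₁ : H₁ →* Equiv.Perm H₁ :=
      { toFun := fun g => Equiv.mulLeft g
        map_one' := by ext x; simp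
        map_mul' := by intro a b; ext x; simp [mul_assoc] }
    let f₂ : H₂ →* Equiv.Perm H₁ :=
      { toFun := fun h => (e.symm.trans (Equiv.mulLeft h)).trans e
        map_one' := by ext x; simp
        map_mul' := by intro a b; ext x; simp [mul_assoc] }
    have hf₁app : ∀ (g : H₁) (x : H₁), f₁ g x = g * x := fun g x => rfl
    have hf₂app : ∀ (h : H₂) (x : H₁), f₂ h x = e (h * e.symm x) := fun h x => rfl
    have inj₁ : Function.Injective f₁ := by
      intro a c h
      have := congrArg (fun σ : Equiv.Perm H₁ => σ 1) h
      simpa [hf₁app] using this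
    have inj₂ : Function.Injective f₂ := by
      intro a c h
      have := congrArg (fun σ : Equiv.Perm H₁ => σ (e 1)) h
      simp only [hf₂app, Equiv.symm_apply_apply] at this
      simpa using e.injective this
    have hN : ∀ n : ℕ,
        Nat.card {K : Subgroup (Equiv.Perm H₁) // K ≤ f₁.range ∧ IsCyclic K ∧ Nat.card K = n} =
        Nat.card {K : Subgroup (Equiv.Perm H₁) // K ≤ f₂.range ∧ IsCyclic K ∧ Nat.card K = n} := by
      intro n
      rcases eq_or_ne n 0 with rfl | hn
      · haveI : ∀ R : Subgroup (Equiv.Perm H₁), IsEmpty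
            {K : Subgroup (Equiv.Perm H₁) // K ≤ R ∧ IsCyclic K ∧ Nat.card K = 0} := by
          intro R
          exact ⟨fun K => (Nat.card_pos (α := K.1)).ne' K.2.2.2⟩
        simp [Nat.card_of_isEmpty]
      · have h1 := count_elements_eq f₁.range n hn
        have h2 := count_elements_eq f₂.range n hn
        rw [← count_range f₁ inj₁ n] at h1
        rw [← count_range f₂ inj₂ n] at h2
        have := (h1.symm.trans ((hstat n).trans h2))
        exact Nat.eq_of_mul_eq_mul_left (Nat.totient_pos.mpr (Nat.pos_of_ne_zero hn)) this
    have fib : ∀ n : ℕ, Nonempty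
        ({K : {K : Subgroup (Equiv.Perm H₁) // K ≤ f₁.range ∧ IsCyclic K} // Nat.card K.1 = n} ≃
         {K : {K : Subgroup (Equiv.Perm H₁) // K ≤ f₂.range ∧ IsCyclic K} // Nat.card K.1 = n}) := by
      intro n
      have reassoc : ∀ R : Subgroup (Equiv.Perm H₁),
          Nat.card {K : {K : Subgroup (Equiv.Perm H₁) // K ≤ R ∧ IsCyclic K} // Nat.card K.1 = n}
          = Nat.card {K : Subgroup (Equiv.Perm H₁) // K ≤ R ∧ IsCyclic K ∧ Nat.card K = n} := by
        intro R
        apply Nat.card_congr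
        exact ((Equiv.subtypeSubtypeEquivSubtypeInter
          (fun K : Subgroup (Equiv.Perm H₁) => K ≤ R ∧ IsCyclic K)
          (fun K => Nat.card K = n)).trans
          (Equiv.subtypeEquivRight (fun K => by tauto)))
      have hcardeq : Nat.card
          {K : {K : Subgroup (Equiv.Perm H₁) // K ≤ f₁.range ∧ IsCyclic K} // Nat.card K.1 = n} =
          Nat.card
          {K : {K : Subgroup (Equiv.Perm H₁) // K ≤ f₂.range ∧ IsCyclic K} // Nat.card K.1 = n} := by
        rw [reassoc, reassoc, hN n]
      haveI := Fintype.ofFinite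
        {K : {K : Subgroup (Equiv.Perm H₁) // K ≤ f₁.range ∧ IsCyclic K} // Nat.card K.1 = n}
      haveI := Fintype.ofFinite
        {K : {K : Subgroup (Equiv.Perm H₁) // K ≤ f₂.range ∧ IsCyclic K} // Nat.card K.1 = n}
      rw [Nat.card_eq_fintype_card, Nat.card_eq_fintype_card] at hcardeq
      exact ⟨Fintype.equivOfCardEq hcardeq⟩
    let b := Equiv.ofFiberEquiv (f := fun K : {K : Subgroup (Equiv.Perm H₁) //
        K ≤ f₁.range ∧ IsCyclic K} => Nat.card K.1)
      (g := fun K : {K : Subgroup (Equiv.Perm H₁) // K ≤ f₂.range ∧ IsCyclic K} => Nat.card K.1)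
      (fun n => (fib n).some)
    have hconj : ∀ K : {K : Subgroup (Equiv.Perm H₁) // K ≤ f₁.range ∧ IsCyclic K},
        ∃ g : Equiv.Perm H₁, Subgroup.map (MulAut.conj g).toMonoidHom K.1 = (b K).1 := by
      intro K
      have hbK : Nat.card (b K).1 = Nat.card K.1 :=
        Equiv.ofFiberEquiv_map (fun n => (fib n).some) K
      obtain ⟨x, hxK, hzx, hox⟩ := exists_gen K.1 K.2.2
      obtain ⟨y, hyK, hzy, hoy⟩ := exists_gen (b K).1 (b K).2.2
      set n := Nat.card K.1 with hn
      have hn0 : 0 < n := Nat.card_pos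
      rw [hbK] at hoy
      obtain ⟨g, hg⟩ := K.2.1 hxK
      obtain ⟨h, hh⟩ := (b K).2.1 hyK
      have hog : orderOf g = n := by
        rw [← hox, ← hg, orderOf_injective f₁ inj₁]
      have hoh : orderOf h = n := by
        rw [← hoy, ← hh, orderOf_injective f₂ inj₂]
      have hσfree : ∀ (z : H₁) (k : ℕ), ((f₁ g) ^ k) z = z → n ∣ k := by
        intro z k hzk
        rw [← map_pow, hf₁app] at hzk
        have hgk : g ^ k = 1 := mul_right_cancel (b := z) (by rw [hzk, one_mul])
        rw [← hog]
        exact orderOf_dvd_of_pow_eq_one hgk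
      have hτfree : ∀ (z : H₁) (k : ℕ), ((f₂ h) ^ k) z = z → n ∣ k := by
        intro z k hzk
        rw [← map_pow, hf₂app] at hzk
        have h1 : h ^ k * e.symm z = e.symm z := by
          have := congrArg e.symm hzk
          rwa [Equiv.symm_apply_apply] at this
        have hhk : h ^ k = 1 := mul_right_cancel (b := e.symm z) (by rw [h1, one_mul])
        rw [← hoh]
        exact orderOf_dvd_of_pow_eq_one hhk
      obtain ⟨π, hπ⟩ := exists_conj_of_free n hn0 (f₁ g) (f₂ h)
        (by rw [← map_pow, ← hog, pow_orderOf_eq_one, map_one])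
        (by rw [← map_pow, ← hoh, pow_orderOf_eq_one, map_one])
        hσfree hτfree
      refine ⟨π, ?_⟩
      rw [← hzx, ← hzy, MonoidHom.map_zpowers]
      congr 1
      show MulAut.conj π x = y
      rw [← hg, ← hh, MulAut.conj_apply, hπ]
    exact ⟨⟨Equiv.Perm H₁, f₁, f₂, inj₁, inj₂, b, hconj⟩⟩
end

section
/- Let G be a finite group, H ≤ G, and g ∈ G. Then χ_H(g) · #H = #(H ∩ C(g)) · #Z(g), where χ_H(g) is the number of right cosets of H fixed by g, C(g) is the conjugacy class of g in G, and Z(g) is the centralizer of g in G. -/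
/-- `χ_H(g)`: the number of right cosets of `H` in `G` fixed by right multiplication
by `g`. -/
noncomputable def chiElt {G : Type*} [Group G] (H : Subgroup G) (g : G) : ℕ :=
  Nat.card {x : RQ H // ∀ a : G, (Quotient.mk'' a : RQ H) = x →
    (Quotient.mk'' (a * g) : RQ H) = x}

section Aux

variable {G : Type*} [Group G] (H : Subgroup G) (g : G)

lemma mk_mul_eq_iff (a : G) :
    (Quotient.mk'' (a * g) : RQ H) = Quotient.mk'' a ↔ a * g * a⁻¹ ∈ H := by
  rw [Quotient.eq'', QuotientGroup.rightRel_apply]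
  constructor
  · intro h
    have h2 := H.inv_mem h
    have h3 : (a * (a * g)⁻¹)⁻¹ = a * g * a⁻¹ := by group
    rwa [h3] at h2
  · intro h
    have h3 : (a * g * a⁻¹)⁻¹ = a * (a * g)⁻¹ := by group
    rw [← h3]
    exact H.inv_mem h

/-- projection from the "good" elements to the fixed cosets. -/
def toFix (a : {a : G // a * g * a⁻¹ ∈ H}) :
    {x : RQ H // ∀ b : G, (Quotient.mk'' b : RQ H) = x →
      (Quotient.mk'' (b * g) : RQ H) = x} := by
  refine ⟨Quotient.mk'' a.1, fun b hb => ?_⟩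
  rw [← hb]
  rw [mk_mul_eq_iff]
  have h1 : a.1 * b⁻¹ ∈ H := QuotientGroup.rightRel_apply.mp (Quotient.eq''.mp hb)
  have h2 : b * g * b⁻¹ = (a.1 * b⁻¹)⁻¹ * (a.1 * g * a.1⁻¹) * (a.1 * b⁻¹) := by group
  rw [h2]
  exact H.mul_mem (H.mul_mem (H.inv_mem h1) a.2) h1

/-- each fiber of `toFix` is equivalent to `H`. -/
noncomputable def fiberFixEquiv (x : {x : RQ H // ∀ b : G, (Quotient.mk'' b : RQ H) = x →
      (Quotient.mk'' (b * g) : RQ H) = x}) :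
    {a : {a : G // a * g * a⁻¹ ∈ H} // toFix H g a = x} ≃ H := by
  set b : G := x.1.out with hbdef
  have hb : (Quotient.mk'' b : RQ H) = x.1 := Quotient.out_eq' x.1
  have hbH : b * g * b⁻¹ ∈ H := (mk_mul_eq_iff H g b).mp (by rw [hb]; exact x.2 b hb)
  refine
    { toFun := fun p => ⟨p.1.1 * b⁻¹, ?_⟩
      invFun := fun h => ⟨⟨(h : G) * b, ?_⟩, ?_⟩
      left_inv := ?_
      right_inv := ?_ }
  · -- p.1.1 * b⁻¹ ∈ H
    have hval : (Quotient.mk'' p.1.1 : RQ H) = x.1 := congrArg Subtype.val p.2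
    have : (Quotient.mk'' p.1.1 : RQ H) = Quotient.mk'' b := by rw [hval, hb]
    have h1 : b * (p.1.1)⁻¹ ∈ H := QuotientGroup.rightRel_apply.mp (Quotient.eq''.mp this)
    have h2 : (b * (p.1.1)⁻¹)⁻¹ = p.1.1 * b⁻¹ := by group
    rw [← h2]
    exact H.inv_mem h1
  · -- (h*b)*g*(h*b)⁻¹ ∈ H
    rename_i h
    have h2 : ((h : G) * b) * g * ((h : G) * b)⁻¹ = (h : G) * (b * g * b⁻¹) * (h : G)⁻¹ := by
      group
    rw [h2]
    exact H.mul_mem (H.mul_mem h.2 hbH) (H.inv_mem h.2)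
  · -- toFix of it equals x
    rename_i h
    apply Subtype.ext
    show (Quotient.mk'' ((h : G) * b) : RQ H) = x.1
    rw [← hb]
    rw [Quotient.eq'', QuotientGroup.rightRel_apply]
    have h2 : ((h : G) * b) * b⁻¹ = (h : G) := by group
    -- need b * ((h:G)*b)⁻¹ ∈ H
    have h3 : b * ((h : G) * b)⁻¹ = (h : G)⁻¹ := by group
    rw [h3]
    exact H.inv_mem h.2
  · intro p
    apply Subtype.ext
    apply Subtype.ext
    show p.1.1 * b⁻¹ * b = p.1.1
    group
  · intro h
    apply Subtype.ext
    show (h : G) * b * b⁻¹ = (h : G)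
    group

/-- projection from the "good" elements to `H ∩ C(g)`. -/
def toConj (a : {a : G // a * g * a⁻¹ ∈ H}) : {x : G // x ∈ H ∧ IsConj g x} :=
  ⟨a.1 * g * a.1⁻¹, a.2, isConj_iff.mpr ⟨a.1, rfl⟩⟩

/-- each fiber of `toConj` is equivalent to the centralizer of `g`. -/
noncomputable def fiberConjEquiv (x : {x : G // x ∈ H ∧ IsConj g x}) :
    {a : {a : G // a * g * a⁻¹ ∈ H} // toConj H g a = x} ≃ Subgroup.centralizer {g} := by
  let c : G := Classical.choose (isConj_iff.mp x.2.2)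
  have hc : c * g * c⁻¹ = x.1 := Classical.choose_spec (isConj_iff.mp x.2.2)
  refine
    { toFun := fun p => ⟨c⁻¹ * p.1.1, ?_⟩
      invFun := fun z => ⟨⟨c * (z : G), ?_⟩, ?_⟩
      left_inv := ?_
      right_inv := ?_ }
  · -- c⁻¹ * a centralizes g
    have ha : p.1.1 * g * p.1.1⁻¹ = x.1 := congrArg Subtype.val p.2
    rw [Subgroup.mem_centralizer_singleton_iff]
    have h3 : (c⁻¹ * p.1.1) * g * (c⁻¹ * p.1.1)⁻¹ = g := by
      calc (c⁻¹ * p.1.1) * g * (c⁻¹ * p.1.1)⁻¹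
          = c⁻¹ * (p.1.1 * g * p.1.1⁻¹) * c := by group
        _ = c⁻¹ * (c * g * c⁻¹) * c := by rw [ha, hc]
        _ = g := by group
    calc (c⁻¹ * p.1.1) * g = ((c⁻¹ * p.1.1) * g * (c⁻¹ * p.1.1)⁻¹) * (c⁻¹ * p.1.1) := by group
      _ = g * (c⁻¹ * p.1.1) := by rw [h3]
  · -- (c*z)*g*(c*z)⁻¹ ∈ H
    rename_i z
    have hcomm : (z : G) * g = g * (z : G) :=
      Subgroup.mem_centralizer_singleton_iff.mp z.2
    have hfix : (z : G) * g * (z : G)⁻¹ = g := by rw [hcomm, mul_inv_cancel_right]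
    have h4 : (c * (z : G)) * g * (c * (z : G))⁻¹ = x.1 := by
      calc (c * (z : G)) * g * (c * (z : G))⁻¹
          = c * ((z : G) * g * (z : G)⁻¹) * c⁻¹ := by group
        _ = c * g * c⁻¹ := by rw [hfix]
        _ = x.1 := hc
    rw [h4]
    exact x.2.1
  · -- toConj of it equals x
    rename_i z
    apply Subtype.ext
    show (c * (z : G)) * g * (c * (z : G))⁻¹ = x.1
    have hcomm : (z : G) * g = g * (z : G) :=
      Subgroup.mem_centralizer_singleton_iff.mp z.2
    have hfix : (z : G) * g * (z : G)⁻¹ = g := by rw [hcomm, mul_inv_cancel_right]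
    calc (c * (z : G)) * g * (c * (z : G))⁻¹
        = c * ((z : G) * g * (z : G)⁻¹) * c⁻¹ := by group
      _ = c * g * c⁻¹ := by rw [hfix]
      _ = x.1 := hc
  · intro p
    apply Subtype.ext
    apply Subtype.ext
    show c * (c⁻¹ * p.1.1) = p.1.1
    group
  · intro z
    apply Subtype.ext
    show c⁻¹ * (c * (z : G)) = (z : G)
    group

end Aux

/-- For `H ≤ G` finite and `g ∈ G`: `χ_H(g) · #H = #(H ∩ C(g)) · #Z(g)`, where `C(g)` is
the conjugacy class of `g` in `G` and `Z(g)` is the centralizer of `g` in `G`. -/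
theorem chiElt_mul_card_eq {G : Type*} [Group G] [Fintype G] (H : Subgroup G) (g : G) :
    chiElt H g * Nat.card H
      = Nat.card {x : G // x ∈ H ∧ IsConj g x} * Nat.card (Subgroup.centralizer {g}) := by
  classical
  have e1 : {a : G // a * g * a⁻¹ ∈ H} ≃
      {x : RQ H // ∀ a : G, (Quotient.mk'' a : RQ H) = x →
        (Quotient.mk'' (a * g) : RQ H) = x} × H :=
    (Equiv.sigmaFiberEquiv (toFix H g)).symm.trans
      (Equiv.sigmaEquivProdOfEquiv (fiberFixEquiv H g))
  have e2 : {a : G // a * g * a⁻¹ ∈ H} ≃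
      {x : G // x ∈ H ∧ IsConj g x} × Subgroup.centralizer {g} :=
    (Equiv.sigmaFiberEquiv (toConj H g)).symm.trans
      (Equiv.sigmaEquivProdOfEquiv (fiberConjEquiv H g))
  calc chiElt H g * Nat.card H
      = Nat.card ({x : RQ H // ∀ a : G, (Quotient.mk'' a : RQ H) = x →
          (Quotient.mk'' (a * g) : RQ H) = x} × H) := by
        rw [Nat.card_prod]; rfl
    _ = Nat.card {a : G // a * g * a⁻¹ ∈ H} := (Nat.card_congr e1).symm
    _ = Nat.card ({x : G // x ∈ H ∧ IsConj g x} × Subgroup.centralizer {g}) :=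
        Nat.card_congr e2
    _ = Nat.card {x : G // x ∈ H ∧ IsConj g x} * Nat.card (Subgroup.centralizer {g}) :=
        Nat.card_prod _ _
end

section
/- Let G be a finite group with subgroups H₁, H₂ such that for every cyclic subgroup K ≤ G, the G-sets H₁\G and H₂\G are isomorphic as K-sets. Then the permutation representations ℚ[H₁\G] and ℚ[H₂\G] are isomorphic as ℚ[G]-modules. -/
open Module LinearMap Representation

section Aux

variable {G : Type} [Group G]


theorem rep_inv_apply {V : Type} [AddCommGroup V] [Module ℚ V]
    (ρ : Representation ℚ G V) (g : G) (x : V) : ρ g⁻¹ (ρ g x) = x := by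
  rw [← Module.End.mul_apply, ← map_mul, inv_mul_cancel, map_one, Module.End.one_apply]

noncomputable abbrev IG {V W : Type} [AddCommGroup V] [Module ℚ V] [AddCommGroup W] [Module ℚ W]
    (ρ : Representation ℚ G V) (σ : Representation ℚ G W) : Submodule ℚ (V →ₗ[ℚ] W) :=
  (Representation.linHom ρ σ).invariants

theorem mem_IG_iff {V W : Type} [AddCommGroup V] [Module ℚ V] [AddCommGroup W] [Module ℚ W]
    (ρ : Representation ℚ G V) (σ : Representation ℚ G W) (f : V →ₗ[ℚ] W) :
    f ∈ IG ρ σ ↔ ∀ (g : G) (x : V), σ g (f x) = f (ρ g x) := by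
  rw [Representation.mem_invariants]
  constructor
  · intro h g x
    have := congrArg (fun F : V →ₗ[ℚ] W => F (ρ g x)) (h g)
    simpa [Representation.linHom_apply, rep_inv_apply] using this
  · intro h g
    ext x
    simp only [Representation.linHom_apply, LinearMap.comp_apply]
    rw [h g, ← Module.End.mul_apply, ← map_mul, mul_inv_cancel, map_one, Module.End.one_apply]

def Stab {V : Type} [AddCommGroup V] [Module ℚ V]
    (ρ : Representation ℚ G V) (p : Submodule ℚ V) : Prop :=
  ∀ g : G, ∀ x ∈ p, ρ g x ∈ p

noncomputable def resRep {V : Type} [AddCommGroup V] [Module ℚ V]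
    (ρ : Representation ℚ G V) (p : Submodule ℚ V) (hp : Stab ρ p) :
    Representation ℚ G p where
  toFun g := (ρ g).restrict (hp g)
  map_one' := by ext x; simp [LinearMap.restrict_apply]
  map_mul' g h := by
    ext x
    simp [LinearMap.restrict_apply, Module.End.mul_apply]

@[simp] theorem resRep_apply {V : Type} [AddCommGroup V] [Module ℚ V]
    (ρ : Representation ℚ G V) (p : Submodule ℚ V) (hp : Stab ρ p)
    (g : G) (x : p) : (resRep ρ p hp g x : V) = ρ g (x : V) := rfl

noncomputable def prodRep {V W : Type} [AddCommGroup V] [Module ℚ V] [AddCommGroup W] [Module ℚ W]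
    (ρ : Representation ℚ G V) (σ : Representation ℚ G W) :
    Representation ℚ G (V × W) where
  toFun g := (ρ g).prodMap (σ g)
  map_one' := by ext x <;> simp
  map_mul' g h := by ext x <;> simp [Module.End.mul_apply]

@[simp] theorem prodRep_apply {V W : Type} [AddCommGroup V] [Module ℚ V] [AddCommGroup W]
    [Module ℚ W] (ρ : Representation ℚ G V) (σ : Representation ℚ G W)
    (g : G) (x : V × W) : prodRep ρ σ g x = (ρ g x.1, σ g x.2) := rfl
section congr
variable {U V W W' : Type} [AddCommGroup U] [Module ℚ U] [AddCommGroup V] [Module ℚ V]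
  [AddCommGroup W] [Module ℚ W] [AddCommGroup W'] [Module ℚ W']

/-- Intertwiner spaces into equivalent representations are equivalent. -/
noncomputable def IGCongr (τ : Representation ℚ G U) (σ : Representation ℚ G W)
    (σ' : Representation ℚ G W') (e : W ≃ₗ[ℚ] W')
    (he : ∀ (g : G) (x : W), e (σ g x) = σ' g (e x)) :
    IG τ σ ≃ₗ[ℚ] IG τ σ' where
  toFun f := ⟨e.toLinearMap ∘ₗ f.1, by
    rw [mem_IG_iff]
    intro g x
    have hf := (mem_IG_iff τ σ f.1).1 f.2 g x
    simp only [LinearMap.comp_apply, LinearEquiv.coe_coe]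
    rw [← he, hf]⟩
  map_add' f₁ f₂ := by ext x; simp
  map_smul' c f := by ext x; simp
  invFun f := ⟨e.symm.toLinearMap ∘ₗ f.1, by
    rw [mem_IG_iff]
    intro g x
    have hf := (mem_IG_iff τ σ' f.1).1 f.2 g x
    apply e.injective
    simp only [LinearMap.comp_apply, LinearEquiv.coe_coe]
    rw [he, e.apply_symm_apply, e.apply_symm_apply, hf]⟩
  left_inv f := by
    apply Subtype.ext; ext x; simp
  right_inv f := by
    apply Subtype.ext; ext x; simp

theorem finrank_IG_congr (τ : Representation ℚ G U) (σ : Representation ℚ G W)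
    (σ' : Representation ℚ G W') (e : W ≃ₗ[ℚ] W')
    (he : ∀ (g : G) (x : W), e (σ g x) = σ' g (e x)) :
    finrank ℚ (IG τ σ) = finrank ℚ (IG τ σ') :=
  (IGCongr τ σ σ' e he).finrank_eq

/-- Intertwiners into a product decompose. -/
noncomputable def IGProd (τ : Representation ℚ G U) (α : Representation ℚ G V)
    (β : Representation ℚ G W) :
    IG τ (prodRep α β) ≃ₗ[ℚ] IG τ α × IG τ β where
  toFun f := (⟨LinearMap.fst ℚ V W ∘ₗ f.1, by
      rw [mem_IG_iff]; intro g x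
      have hf := (mem_IG_iff τ (prodRep α β) f.1).1 f.2 g x
      simp only [LinearMap.comp_apply, LinearMap.fst_apply]
      rw [← hf]; rfl⟩,
    ⟨LinearMap.snd ℚ V W ∘ₗ f.1, by
      rw [mem_IG_iff]; intro g x
      have hf := (mem_IG_iff τ (prodRep α β) f.1).1 f.2 g x
      simp only [LinearMap.comp_apply, LinearMap.snd_apply]
      rw [← hf]; rfl⟩)
  map_add' f₁ f₂ := by constructor <;> (apply Subtype.ext; ext x; simp)
  map_smul' c f := by constructor <;> (apply Subtype.ext; ext x; simp)
  invFun f := ⟨LinearMap.prod f.1.1 f.2.1, by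
    rw [mem_IG_iff]; intro g x
    have h1 := (mem_IG_iff τ α f.1.1).1 f.1.2 g x
    have h2 := (mem_IG_iff τ β f.2.1).1 f.2.2 g x
    simp only [LinearMap.prod_apply, Function.prod, prodRep_apply]
    rw [h1, h2]⟩
  left_inv f := by apply Subtype.ext; ext x <;> simp
  right_inv f := by
    constructor <;> (apply Subtype.ext; ext x; simp)

theorem finrank_IG_prod [FiniteDimensional ℚ U] [FiniteDimensional ℚ V] [FiniteDimensional ℚ W]
    (τ : Representation ℚ G U) (α : Representation ℚ G V) (β : Representation ℚ G W) :
    finrank ℚ (IG τ (prodRep α β)) = finrank ℚ (IG τ α) + finrank ℚ (IG τ β) := by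
  rw [(IGProd τ α β).finrank_eq, Module.finrank_prod]

end congr
theorem rep_inv_apply' {V : Type} [AddCommGroup V] [Module ℚ V]
    (ρ : Representation ℚ G V) (g : G) (x : V) : ρ g (ρ g⁻¹ x) = x := by
  rw [← Module.End.mul_apply, ← map_mul, mul_inv_cancel, map_one, Module.End.one_apply]

theorem rep_mul_apply {V : Type} [AddCommGroup V] [Module ℚ V]
    (ρ : Representation ℚ G V) (g h : G) (x : V) : ρ (g * h) x = ρ g (ρ h x) := by
  rw [map_mul, Module.End.mul_apply]

/-- Maschke: an invariant subspace has an invariant complement. -/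
theorem exists_stab_isCompl [Fintype G] {V : Type} [AddCommGroup V] [Module ℚ V]
    (ρ : Representation ℚ G V) (p : Submodule ℚ V) (hp : Stab ρ p) :
    ∃ q : Submodule ℚ V, Stab ρ q ∧ IsCompl p q := by
  obtain ⟨q₀, hq₀⟩ := Submodule.exists_isCompl p
  set π : V →ₗ[ℚ] V := p.subtype ∘ₗ p.projectionOnto q₀ hq₀ with hπ
  have hπmem : ∀ x : V, π x ∈ p := fun x => (p.projectionOnto q₀ hq₀ x).2
  have hπid : ∀ x ∈ p, π x = x := by
    intro x hx
    simp only [hπ, LinearMap.comp_apply]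
    rw [show x = ((⟨x, hx⟩ : p) : V) from rfl, Submodule.projectionOnto_apply_left hq₀]
    rfl
  set π' : V →ₗ[ℚ] V := (Fintype.card G : ℚ)⁻¹ • ∑ g : G, ρ g ∘ₗ π ∘ₗ ρ g⁻¹ with hπ'
  have hπ'app : ∀ x : V, π' x = (Fintype.card G : ℚ)⁻¹ • ∑ g : G, ρ g (π (ρ g⁻¹ x)) := by
    intro x
    simp [hπ', LinearMap.sum_apply]
  have hcomm : ∀ (h : G) (x : V), π' (ρ h x) = ρ h (π' x) := by
    intro h x
    rw [hπ'app, hπ'app, map_smul, map_sum]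
    congr 1
    refine Fintype.sum_equiv (Equiv.mulLeft h⁻¹) _ _ fun g => ?_
    simp only [Equiv.coe_mulLeft]
    rw [← rep_mul_apply ρ g⁻¹ h, ← rep_mul_apply ρ h (h⁻¹ * g), mul_inv_cancel_left,
      mul_inv_rev, inv_inv]
  have hproj : LinearMap.IsProj p π' := by
    constructor
    · intro x
      rw [hπ'app]
      refine Submodule.smul_mem _ _ (Submodule.sum_mem _ fun g _ => hp g _ (hπmem _))
    · intro x hx
      rw [hπ'app]
      have : ∀ g : G, ρ g (π (ρ g⁻¹ x)) = x := fun g => by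
        rw [hπid _ (hp g⁻¹ x hx), rep_inv_apply']
      rw [Finset.sum_congr rfl fun g _ => this g, Finset.sum_const, Finset.card_univ,
        ← Nat.cast_smul_eq_nsmul ℚ, smul_smul, inv_mul_cancel₀, one_smul]
      exact_mod_cast Fintype.card_ne_zero
  refine ⟨LinearMap.ker π', fun g x hx => ?_, hproj.isCompl⟩
  rw [LinearMap.mem_ker, hcomm, LinearMap.mem_ker.1 hx, map_zero]

theorem iso_of_subsingleton_left {V W : Type} [AddCommGroup V] [Module ℚ V] [AddCommGroup W]
    [Module ℚ W] [Subsingleton V] [Subsingleton W] (ρ : Representation ℚ G V)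
    (σ : Representation ℚ G W) :
    ∃ e : V ≃ₗ[ℚ] W, ∀ (g : G) (x : V), e (ρ g x) = σ g (e x) :=
  ⟨{ toFun := fun _ => 0, invFun := fun _ => 0,
     map_add' := fun _ _ => (Subsingleton.elim _ _),
     map_smul' := fun _ _ => (Subsingleton.elim _ _),
     left_inv := fun _ => Subsingleton.elim _ _,
     right_inv := fun _ => Subsingleton.elim _ _ }, fun _ _ => Subsingleton.elim _ _⟩

/-- If `V` is trivial and intertwiner dimensions agree then `W` is trivial too. -/
theorem subsingleton_right_of_IG {V W : Type} [AddCommGroup V] [Module ℚ V] [AddCommGroup W]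
    [Module ℚ W] [FiniteDimensional ℚ W] [Subsingleton V]
    (ρ : Representation ℚ G V) (σ : Representation ℚ G W)
    (hIG : ∀ (U : Type) [AddCommGroup U] [Module ℚ U] [FiniteDimensional ℚ U]
      (τ : Representation ℚ G U), finrank ℚ (IG τ ρ) = finrank ℚ (IG τ σ)) :
    Subsingleton W := by
  by_contra hW
  rw [not_subsingleton_iff_nontrivial] at hW
  have hid : (LinearMap.id : W →ₗ[ℚ] W) ∈ IG σ σ := by
    rw [mem_IG_iff]; intro g x; rfl
  have h1 : 0 < finrank ℚ (IG σ σ) := by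
    rw [Module.finrank_pos_iff]
    refine nontrivial_of_ne ⟨LinearMap.id, hid⟩ 0 fun hc => ?_
    obtain ⟨x, hx⟩ := exists_ne (0 : W)
    exact hx (by simpa using congrArg (fun F : ↥(IG σ σ) => (F : W →ₗ[ℚ] W) x) hc)
  have h2 : finrank ℚ (IG σ ρ) = 0 := by
    have : Subsingleton (W →ₗ[ℚ] V) := inferInstance
    exact Module.finrank_zero_iff.2 inferInstance
  rw [hIG W σ] at h2
  omega

theorem rep_iso_of_IG_finrank_eq [Fintype G] :
    ∀ (n : ℕ) (V W : Type) [AddCommGroup V] [Module ℚ V] [AddCommGroup W] [Module ℚ W]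
      [FiniteDimensional ℚ V] [FiniteDimensional ℚ W]
      (ρ : Representation ℚ G V) (σ : Representation ℚ G W), finrank ℚ V ≤ n →
      (∀ (U : Type) [AddCommGroup U] [Module ℚ U] [FiniteDimensional ℚ U]
        (τ : Representation ℚ G U), finrank ℚ (IG τ ρ) = finrank ℚ (IG τ σ)) →
      ∃ e : V ≃ₗ[ℚ] W, ∀ (g : G) (x : V), e (ρ g x) = σ g (e x) := by
  intro n
  induction n with
  | zero =>
    intro V W _ _ _ _ _ _ ρ σ hn hIG
    have hV : Subsingleton V := Module.finrank_zero_iff.1 (Nat.le_zero.1 hn)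
    have hW : Subsingleton W := subsingleton_right_of_IG ρ σ hIG
    exact iso_of_subsingleton_left ρ σ
  | succ n ih =>
    intro V W _ _ _ _ _ _ ρ σ hn hIG
    by_cases hV0 : finrank ℚ V = 0
    · have hV : Subsingleton V := Module.finrank_zero_iff.1 hV0
      have hW : Subsingleton W := subsingleton_right_of_IG ρ σ hIG
      exact iso_of_subsingleton_left ρ σ
    have hVnt : Nontrivial V := Module.finrank_pos_iff.1 (Nat.pos_of_ne_zero hV0)
    -- pick a minimal nonzero invariant subspace S of V
    set 𝒮 : Set ℕ := {m | ∃ p : Submodule ℚ V, p ≠ ⊥ ∧ Stab ρ p ∧ finrank ℚ p = m} with h𝒮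
    have htopne : (⊤ : Submodule ℚ V) ≠ ⊥ := by
      intro hc
      exact hV0 (by rw [← finrank_top ℚ V, hc, finrank_bot])
    have h𝒮ne : 𝒮.Nonempty := ⟨finrank ℚ (⊤ : Submodule ℚ V), ⊤, htopne, fun g x _ => trivial, rfl⟩
    obtain ⟨S, hSne, hSstab, hSrank⟩ : ∃ p : Submodule ℚ V, p ≠ ⊥ ∧ Stab ρ p ∧
        finrank ℚ p = sInf 𝒮 := Nat.sInf_mem h𝒮ne
    have hSmin : ∀ p : Submodule ℚ V, p ≠ ⊥ → Stab ρ p → finrank ℚ S ≤ finrank ℚ p := by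
      intro p hp hps
      rw [hSrank]
      exact Nat.sInf_le ⟨p, hp, hps, rfl⟩
    set τS := resRep ρ S hSstab with hτS
    -- the inclusion is a nonzero intertwiner
    have hιmem : S.subtype ∈ IG τS ρ := by
      rw [mem_IG_iff]; intro g x; exact (resRep_apply ρ S hSstab g x).symm
    obtain ⟨x₀, hx₀S, hx₀⟩ := Submodule.ne_bot_iff S |>.1 hSne
    have h1 : 0 < finrank ℚ (IG τS ρ) := by
      rw [Module.finrank_pos_iff]
      refine nontrivial_of_ne ⟨S.subtype, hιmem⟩ 0 fun hc => hx₀ ?_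
      have h5 := congrArg (fun F : ↥(IG τS ρ) => (F : ↥S →ₗ[ℚ] V) ⟨x₀, hx₀S⟩) hc
      simpa using h5
    have h2 : 0 < finrank ℚ (IG τS σ) := by rw [← hIG ↥S τS]; exact h1
    -- get a nonzero intertwiner f : S → W
    have h3 : IG τS σ ≠ ⊥ := by
      intro hc
      rw [hc] at h2
      simp [finrank_bot] at h2
    obtain ⟨f, hfIG, hf0⟩ := (Submodule.ne_bot_iff _).1 h3
    -- f is injective
    have hfinj : Function.Injective f := by
      rw [← LinearMap.ker_eq_bot]
      set K := (LinearMap.ker f).map S.subtype with hK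
      have hKstab : Stab ρ K := by
        intro g x hx
        obtain ⟨y, hy, rfl⟩ := Submodule.mem_map.1 hx
        refine Submodule.mem_map.2 ⟨τS g y, ?_, resRep_apply ρ S hSstab g y⟩
        rw [LinearMap.mem_ker, ← (mem_IG_iff τS σ f).1 hfIG g y, LinearMap.mem_ker.1 hy, map_zero]
      rcases eq_or_ne K ⊥ with hKbot | hKne
      · rw [eq_bot_iff]
        intro y hy
        have hmem : (y : V) ∈ K := Submodule.mem_map.2 ⟨y, hy, rfl⟩
        rw [hKbot, Submodule.mem_bot] at hmem
        exact (Submodule.mem_bot ℚ).2 (Subtype.ext hmem)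
      · exfalso
        have hKS : K ≤ S := Submodule.map_subtype_le _ _
        have h4 : finrank ℚ S ≤ finrank ℚ K := hSmin K hKne hKstab
        have h5 : K = S := Submodule.eq_of_le_of_finrank_le hKS h4
        apply hf0
        ext y
        have : (y : V) ∈ K := h5.symm ▸ y.2
        obtain ⟨z, hz, hzy⟩ := Submodule.mem_map.1 this
        have : z = y := Subtype.ext hzy
        rw [← this]
        simpa using hz
    set S' := LinearMap.range f with hS'
    have hS'stab : Stab σ S' := by
      intro g x hx
      obtain ⟨y, rfl⟩ := hx
      exact ⟨τS g y, ((mem_IG_iff τS σ f).1 hfIG g y).symm⟩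
    set fe : ↥S ≃ₗ[ℚ] ↥S' := LinearEquiv.ofInjective f hfinj with hfe'
    set τS' := resRep σ S' hS'stab with hτS'
    have hfe : ∀ (g : G) (y : ↥S), fe (τS g y) = τS' g (fe y) := by
      intro g y
      refine Subtype.ext ?_
      show (LinearEquiv.ofInjective f hfinj (τS g y) : W) =
        σ g ((LinearEquiv.ofInjective f hfinj y : W))
      rw [LinearEquiv.ofInjective_apply, LinearEquiv.ofInjective_apply]
      exact ((mem_IG_iff τS σ f).1 hfIG g y).symm
    obtain ⟨C, hCstab, hCcompl⟩ := exists_stab_isCompl ρ S hSstab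
    obtain ⟨D, hDstab, hDcompl⟩ := exists_stab_isCompl σ S' hS'stab
    set τC := resRep ρ C hCstab with hτC
    set τD := resRep σ D hDstab with hτD
    have heV : ∀ (g : G) (z : ↥S × ↥C),
        Submodule.prodEquivOfIsCompl S C hCcompl (prodRep τS τC g z)
          = ρ g (Submodule.prodEquivOfIsCompl S C hCcompl z) := by
      intro g z
      rw [Submodule.coe_prodEquivOfIsCompl', Submodule.coe_prodEquivOfIsCompl', map_add]
      rfl
    have heW : ∀ (g : G) (z : ↥S' × ↥D),
        Submodule.prodEquivOfIsCompl S' D hDcompl (prodRep τS' τD g z)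
          = σ g (Submodule.prodEquivOfIsCompl S' D hDcompl z) := by
      intro g z
      rw [Submodule.coe_prodEquivOfIsCompl', Submodule.coe_prodEquivOfIsCompl', map_add]
      rfl
    have heV' : ∀ (g : G) (x : V), (Submodule.prodEquivOfIsCompl S C hCcompl).symm (ρ g x)
        = prodRep τS τC g ((Submodule.prodEquivOfIsCompl S C hCcompl).symm x) := by
      intro g x
      apply (Submodule.prodEquivOfIsCompl S C hCcompl).injective
      rw [LinearEquiv.apply_symm_apply, heV, LinearEquiv.apply_symm_apply]
    have heW' : ∀ (g : G) (x : W), (Submodule.prodEquivOfIsCompl S' D hDcompl).symm (σ g x)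
        = prodRep τS' τD g ((Submodule.prodEquivOfIsCompl S' D hDcompl).symm x) := by
      intro g x
      apply (Submodule.prodEquivOfIsCompl S' D hDcompl).injective
      rw [LinearEquiv.apply_symm_apply, heW, LinearEquiv.apply_symm_apply]
    have hIG' : ∀ (U : Type) [AddCommGroup U] [Module ℚ U] [FiniteDimensional ℚ U]
        (τ : Representation ℚ G U), finrank ℚ (IG τ τC) = finrank ℚ (IG τ τD) := by
      intro U _ _ _ τ
      have e1 : finrank ℚ (IG τ ρ) = finrank ℚ (IG τ (prodRep τS τC)) :=
        finrank_IG_congr τ ρ (prodRep τS τC) (Submodule.prodEquivOfIsCompl S C hCcompl).symm heV'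
      have e2 : finrank ℚ (IG τ σ) = finrank ℚ (IG τ (prodRep τS' τD)) :=
        finrank_IG_congr τ σ (prodRep τS' τD) (Submodule.prodEquivOfIsCompl S' D hDcompl).symm heW'
      rw [finrank_IG_prod] at e1 e2
      have e3 : finrank ℚ (IG τ τS) = finrank ℚ (IG τ τS') :=
        finrank_IG_congr τ τS τS' fe hfe
      have e4 := hIG U τ
      omega
    have hrank : finrank ℚ S + finrank ℚ C = finrank ℚ V :=
      Submodule.finrank_add_eq_of_isCompl hCcompl
    have hSpos : 0 < finrank ℚ S :=
      Module.finrank_pos_iff.2 (nontrivial_of_ne (⟨x₀, hx₀S⟩ : ↥S) 0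
        (fun hc => hx₀ (congrArg Subtype.val hc)))
    obtain ⟨e', he'⟩ := ih ↥C ↥D τC τD (by omega) hIG'
    refine ⟨((Submodule.prodEquivOfIsCompl S C hCcompl).symm ≪≫ₗ
      (fe.prodCongr e')) ≪≫ₗ (Submodule.prodEquivOfIsCompl S' D hDcompl), ?_⟩
    intro g x
    simp only [LinearEquiv.trans_apply]
    rw [heV']
    have hmid : ∀ (z : ↥S × ↥C), (fe.prodCongr e') (prodRep τS τC g z)
        = prodRep τS' τD g ((fe.prodCongr e') z) := by
      intro z
      apply Prod.ext
      · simpa using hfe g z.1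
      · simpa using he' g z.2
    rw [hmid, heW]


theorem rmul_one (H : Subgroup G) : rmul H 1 = id := by
  funext x
  induction x using Quotient.inductionOn' with
  | h a => show Quotient.map' _ _ _ = _; simp [rmul, Quotient.map'_mk'']

theorem rmul_mul (H : Subgroup G) (k₁ k₂ : G) :
    rmul H (k₁ * k₂) = rmul H k₂ ∘ rmul H k₁ := by
  funext x
  induction x using Quotient.inductionOn' with
  | h a =>
    show Quotient.map' _ _ _ = _
    simp [rmul, Quotient.map'_mk'', mul_assoc]

/-- The permutation representation of `G` on `ℚ[H\G]`. -/
noncomputable def permRep (H : Subgroup G) : Representation ℚ G (RQ H →₀ ℚ) where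
  toFun g := Finsupp.lmapDomain ℚ ℚ (rmul H g⁻¹)
  map_one' := by
    show Finsupp.lmapDomain ℚ ℚ (rmul H 1⁻¹) = 1
    rw [inv_one, rmul_one, Finsupp.lmapDomain_id]
    rfl
  map_mul' g₁ g₂ := by
    show Finsupp.lmapDomain ℚ ℚ (rmul H (g₁ * g₂)⁻¹) =
      Finsupp.lmapDomain ℚ ℚ (rmul H g₁⁻¹) * Finsupp.lmapDomain ℚ ℚ (rmul H g₂⁻¹)
    have h9 : rmul H (g₁ * g₂)⁻¹ = rmul H g₁⁻¹ ∘ rmul H g₂⁻¹ := by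
      rw [mul_inv_rev, rmul_mul]
    rw [h9, Finsupp.lmapDomain_comp]
    rfl

@[simp] theorem permRep_apply (H : Subgroup G) (g : G) (v : RQ H →₀ ℚ) :
    permRep H g v = Finsupp.mapDomain (rmul H g⁻¹) v := rfl

instance zpowers_cyclic (g : G) : IsCyclic (Subgroup.zpowers g) := by
  refine ⟨⟨⟨g, Subgroup.mem_zpowers g⟩, fun x => ?_⟩⟩
  obtain ⟨n, hn⟩ := x.2
  exact ⟨n, Subtype.ext (by simpa using hn)⟩

theorem permRep_char_eq [Fintype G] (H₁ H₂ : Subgroup G)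
    (h : ∀ K : Subgroup G, IsCyclic K →
      ∃ e : RQ H₁ ≃ RQ H₂, ∀ k ∈ K, ∀ x : RQ H₁, e (rmul H₁ k x) = rmul H₂ k (e x)) (g : G) :
    trace ℚ (RQ H₁ →₀ ℚ) (permRep H₁ g) = trace ℚ (RQ H₂ →₀ ℚ) (permRep H₂ g) := by
  obtain ⟨e, he⟩ := h (Subgroup.zpowers g⁻¹) inferInstance
  have he' : ∀ x, e (rmul H₁ g⁻¹ x) = rmul H₂ g⁻¹ (e x) :=
    he g⁻¹ (Subgroup.mem_zpowers _)
  set E : (RQ H₁ →₀ ℚ) ≃ₗ[ℚ] (RQ H₂ →₀ ℚ) := Finsupp.domLCongr e with hE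
  have key : permRep H₂ g = E.conj (permRep H₁ g) := by
    apply Finsupp.lhom_ext
    intro a b
    rw [LinearEquiv.conj_apply]
    simp only [LinearMap.comp_apply, LinearEquiv.coe_coe, permRep_apply, hE,
      Finsupp.domLCongr_symm, Finsupp.domLCongr_single, Finsupp.mapDomain_single, he',
      Equiv.apply_symm_apply]
  rw [key, trace_conj']

theorem cast_finrank_IG [Fintype G] {U V : Type} [AddCommGroup U] [Module ℚ U] [FiniteDimensional ℚ U]
    [AddCommGroup V] [Module ℚ V] [FiniteDimensional ℚ V]
    (τ : Representation ℚ G U) (ρ : Representation ℚ G V) :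
    ((finrank ℚ (IG τ ρ) : ℚ)) = (Fintype.card G : ℚ)⁻¹ * ∑ g : G,
      LinearMap.trace ℚ U (τ g⁻¹) * LinearMap.trace ℚ V (ρ g) := by
  letI : Invertible ((Fintype.card G : ℚ)) :=
    invertibleOfNonzero (by exact_mod_cast Fintype.card_ne_zero)
  have h1 := FDRep.average_char_eq_finrank_invariants (FDRep.of (Representation.linHom τ ρ))
  rw [show (FDRep.of (Representation.linHom τ ρ)).ρ = Representation.linHom τ ρ from
    FDRep.of_ρ' _] at h1
  have h2 : ∀ g : G, (FDRep.of (Representation.linHom τ ρ)).character g =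
      LinearMap.trace ℚ U (τ g⁻¹) * LinearMap.trace ℚ V (ρ g) := by
    intro g
    have := FDRep.char_linHom (FDRep.of τ) (FDRep.of ρ) g
    rw [show (FDRep.of τ).ρ = τ from FDRep.of_ρ' _, show (FDRep.of ρ).ρ = ρ from FDRep.of_ρ' _]
      at this
    rw [this]
    rfl
  simp only [h2, invOf_eq_inv, smul_eq_mul, Nat.card_eq_fintype_card] at h1
  exact h1.symm

end Aux

/-- If for every cyclic subgroup `K ≤ G` the `G`-sets `H₁\G` and `H₂\G` are isomorphic as
`K`-sets, then the permutation modules `ℚ[H₁\G]` and `ℚ[H₂\G]` are isomorphic as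
`ℚ[G]`-modules (a `ℚ`-linear isomorphism commuting with the `G`-action). -/
theorem rational_perm_modules_iso_of_cyclic_isos {G : Type} [Group G] [Fintype G]
    (H₁ H₂ : Subgroup G)
    (h : ∀ K : Subgroup G, IsCyclic K →
      ∃ e : RQ H₁ ≃ RQ H₂, ∀ k ∈ K, ∀ x : RQ H₁, e (rmul H₁ k x) = rmul H₂ k (e x)) :
    ∃ E : (RQ H₁ →₀ ℚ) ≃ₗ[ℚ] (RQ H₂ →₀ ℚ),
      ∀ (g : G) (v : RQ H₁ →₀ ℚ),
        E (Finsupp.mapDomain (rmul H₁ g) v) = Finsupp.mapDomain (rmul H₂ g) (E v) := by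
  classical
  have hchar := permRep_char_eq H₁ H₂ h
  have hIG : ∀ (U : Type) [AddCommGroup U] [Module ℚ U] [FiniteDimensional ℚ U]
      (τ : Representation ℚ G U),
      finrank ℚ (IG τ (permRep H₁)) = finrank ℚ (IG τ (permRep H₂)) := by
    intro U _ _ _ τ
    have c1 := cast_finrank_IG τ (permRep H₁)
    have c2 := cast_finrank_IG τ (permRep H₂)
    have c3 : ((finrank ℚ (IG τ (permRep H₁)) : ℚ)) = finrank ℚ (IG τ (permRep H₂)) := by
      rw [c1, c2]
      congr 1
      exact Finset.sum_congr rfl fun g _ => by rw [hchar g]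
    exact_mod_cast c3
  obtain ⟨e, he⟩ := rep_iso_of_IG_finrank_eq (finrank ℚ (RQ H₁ →₀ ℚ)) (RQ H₁ →₀ ℚ)
    (RQ H₂ →₀ ℚ) (permRep H₁) (permRep H₂) le_rfl hIG
  refine ⟨e, fun g v => ?_⟩
  have h2 := he g⁻¹ v
  simpa only [permRep_apply, inv_inv] using h2
end

section
/- Let G be a finite group with rationally equivalent subgroups H₁, H₂ (i.e., #(H₁ ∩ C) = #(H₂ ∩ C) for every conjugacy class C of G). Then H₁ and H₂ have the same normal core in G, i.e., the intersection of all G-conjugates of H₁ equals the intersection of all G-conjugates of H₂. -/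
lemma mem_normalCore_iff_card {G : Type*} [Group G] [Fintype G] (H : Subgroup G) (g : G) :
    g ∈ H.normalCore ↔
      Nat.card {x : G // x ∈ H ∧ IsConj g x} = Nat.card {x : G // IsConj g x} := by
  have hcore : g ∈ H.normalCore ↔ ∀ b : G, b * g * b⁻¹ ∈ H := Iff.rfl
  have hsub : {x : G | x ∈ H ∧ IsConj g x} ⊆ {x : G | IsConj g x} := fun x hx => hx.2
  constructor
  · intro hg
    refine Nat.card_congr (Equiv.subtypeEquivRight fun x => ⟨fun hx => hx.2, fun hx => ?_⟩)
    obtain ⟨c, hc⟩ := isConj_iff.mp hx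
    exact ⟨hc ▸ hcore.mp hg c, hx⟩
  · intro hcard
    have h1 : Nat.card {x : G // x ∈ H ∧ IsConj g x}
        = ({x : G | x ∈ H ∧ IsConj g x}).ncard := Nat.card_coe_set_eq _
    have h2 : Nat.card {x : G // IsConj g x} = ({x : G | IsConj g x}).ncard :=
      Nat.card_coe_set_eq _
    have hset : {x : G | x ∈ H ∧ IsConj g x} = {x : G | IsConj g x} :=
      Set.eq_of_subset_of_ncard_le hsub (by rw [← h1, ← h2, hcard]) (Set.toFinite _)
    rw [hcore]
    intro b
    have : (b * g * b⁻¹) ∈ {x : G | x ∈ H ∧ IsConj g x} := by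
      rw [hset]
      exact isConj_iff.mpr ⟨b, rfl⟩
    exact this.1

/-- Rationally equivalent subgroups of a finite group (subgroups meeting every conjugacy
class in sets of equal cardinality) have the same normal core. -/
theorem normalCore_eq_of_rationally_equivalent {G : Type*} [Group G] [Fintype G]
    (H₁ H₂ : Subgroup G)
    (h : ∀ g : G, Nat.card {x : G // x ∈ H₁ ∧ IsConj g x}
      = Nat.card {x : G // x ∈ H₂ ∧ IsConj g x}) :
    H₁.normalCore = H₂.normalCore := by
  ext g
  rw [mem_normalCore_iff_card, mem_normalCore_iff_card, h g]
end

section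
/- Let G be a finite group with subgroups H₁, H₂ that are rationally equivalent (each conjugacy class of G meets H₁ and H₂ in the same number of elements), and let N be their common normal core. Then the images H₁/N and H₂/N are rationally equivalent subgroups of G/N, and H₁/N is conjugate to H₂/N in G/N if and only if H₁ is conjugate to H₂ in G. -/
private lemma key_count {G : Type*} [Group G] [Fintype G] (H₁ H₂ : Subgroup G)
    (hrat : ∀ g : G, Nat.card {x : G // x ∈ H₁ ∧ IsConj g x}
      = Nat.card {x : G // x ∈ H₂ ∧ IsConj g x})
    (P : G → Prop) (hP : ∀ a g : G, P g → P (a * g * a⁻¹)) :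
    Nat.card {x : G // x ∈ H₁ ∧ P x} = Nat.card {x : G // x ∈ H₂ ∧ P x} := by
  classical
  have hP' : ∀ g x : G, IsConj g x → (P g ↔ P x) := by
    intro g x hgx
    obtain ⟨a, ha⟩ := isConj_iff.mp hgx
    constructor
    · intro h; rw [← ha]; exact hP a g h
    · intro h
      have h2 : P (a⁻¹ * x * a⁻¹⁻¹) := hP a⁻¹ x h
      rw [← ha, inv_inv] at h2
      have h3 : a⁻¹ * (a * g * a⁻¹) * a = g := by group
      rwa [h3] at h2
  have count : ∀ H : Subgroup G,
      Nat.card {x : G // x ∈ H ∧ P x}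
        = ∑ c : ConjClasses G, (Finset.univ.filter
            (fun x : G => (x ∈ H ∧ P x) ∧ ConjClasses.mk x = c)).card := by
    intro H
    rw [Nat.card_eq_fintype_card, Fintype.card_subtype]
    rw [Finset.card_eq_sum_card_fiberwise
      (f := fun x : G => ConjClasses.mk x) (t := Finset.univ) (fun x _ => Finset.mem_univ _)]
    apply Finset.sum_congr rfl
    intro c _
    congr 1
    ext x
    simp [Finset.mem_filter, and_assoc]
  rw [count H₁, count H₂]
  apply Finset.sum_congr rfl
  intro c _
  obtain ⟨g, hg⟩ := ConjClasses.exists_rep c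
  have hmk : ∀ x : G, ConjClasses.mk x = c ↔ IsConj g x := by
    intro x
    rw [← hg, eq_comm, ConjClasses.mk_eq_mk_iff_isConj]
  by_cases hPg : P g
  · have hfilt : ∀ H : Subgroup G,
        (Finset.univ.filter (fun x : G => (x ∈ H ∧ P x) ∧ ConjClasses.mk x = c))
          = Finset.univ.filter (fun x : G => x ∈ H ∧ IsConj g x) := by
      intro H
      ext x
      simp only [Finset.mem_filter, Finset.mem_univ, true_and, hmk x]
      constructor
      · rintro ⟨⟨hx, _⟩, hc⟩; exact ⟨hx, hc⟩
      · rintro ⟨hx, hc⟩; exact ⟨⟨hx, (hP' g x hc).mp hPg⟩, hc⟩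
    rw [hfilt H₁, hfilt H₂]
    have h3 := hrat g
    rwa [Nat.card_eq_fintype_card, Nat.card_eq_fintype_card,
      Fintype.card_subtype, Fintype.card_subtype] at h3
  · have hfilt : ∀ H : Subgroup G,
        (Finset.univ.filter (fun x : G => (x ∈ H ∧ P x) ∧ ConjClasses.mk x = c))
          = (∅ : Finset G) := by
      intro H
      ext x
      simp only [Finset.mem_filter, Finset.mem_univ, true_and, Finset.notMem_empty,
        iff_false, not_and]
      rintro ⟨_, hx⟩ hc
      exact hPg ((hP' g x ((hmk x).mp hc)).mpr hx)
    rw [hfilt H₁, hfilt H₂]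

private lemma card_aux {G : Type*} [Group G] [Fintype G] (N : Subgroup G) [N.Normal]
    (H : Subgroup G) (hNH : N ≤ H) (q : G ⧸ N) :
    Nat.card {y : G // y ∈ H ∧ IsConj q (QuotientGroup.mk' N y)}
      = Nat.card {x : G ⧸ N // x ∈ Subgroup.map (QuotientGroup.mk' N) H ∧ IsConj q x}
        * Nat.card N := by
  rw [← Nat.card_prod]
  apply Nat.card_congr
  have memN : ∀ n : G, n ∈ N ↔ QuotientGroup.mk' N n = 1 := fun n =>
    (QuotientGroup.eq_one_iff n).symm
  have hout : ∀ x : G ⧸ N, QuotientGroup.mk' N x.out = x := fun x =>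
    QuotientGroup.out_eq' x
  have memH : ∀ x : G ⧸ N, x ∈ Subgroup.map (QuotientGroup.mk' N) H → x.out ∈ H := by
    rintro x ⟨y, hy, rfl⟩
    have h2 : y⁻¹ * (QuotientGroup.mk' N y).out ∈ N := by
      rw [memN, map_mul, map_inv, hout, inv_mul_cancel]
    have := mul_mem hy (hNH h2)
    rwa [mul_inv_cancel_left] at this
  refine
    { toFun := fun y => (⟨QuotientGroup.mk' N y.1, ⟨y.1, y.2.1, rfl⟩, y.2.2⟩,
        ⟨(QuotientGroup.mk' N y.1 : G ⧸ N).out⁻¹ * y.1, by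
          rw [memN, map_mul, map_inv, hout, inv_mul_cancel]⟩),
      invFun := fun p => ⟨(p.1.1 : G ⧸ N).out * (p.2 : G), ⟨?_, ?_⟩⟩,
      left_inv := ?_, right_inv := ?_ }
  · exact mul_mem (memH p.1.1 p.1.2.1) (hNH p.2.2)
  · have : QuotientGroup.mk' N ((p.1.1 : G ⧸ N).out * (p.2 : G)) = p.1.1 := by
      rw [map_mul, hout, (memN _).mp p.2.2, mul_one]
    rw [this]
    exact p.1.2.2
  · rintro ⟨y, hy⟩
    simp only [Subtype.mk.injEq]
    rw [mul_inv_cancel_left]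
  · rintro ⟨⟨x, hx⟩, ⟨n, hn⟩⟩
    have hq : QuotientGroup.mk' N (x.out * n) = x := by
      rw [map_mul, hout, (memN _).mp hn, mul_one]
    ext
    · simp only [hq]
    · simp only [hq, inv_mul_cancel_left]

/-- Let `H₁, H₂` be rationally equivalent subgroups of a finite group `G` (every conjugacy
class of `G` meets them in the same number of elements) with common normal core `N`.  Then
the images `H₁/N` and `H₂/N` are rationally equivalent subgroups of `G/N`, and `H₁/N` is
conjugate to `H₂/N` in `G/N` if and only if `H₁` is conjugate to `H₂` in `G`. -/
theorem rational_equivalence_descends_to_core_quotient {G : Type*} [Group G] [Fintype G]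
    (H₁ H₂ : Subgroup G)
    (hrat : ∀ g : G, Nat.card {x : G // x ∈ H₁ ∧ IsConj g x}
      = Nat.card {x : G // x ∈ H₂ ∧ IsConj g x})
    (N : Subgroup G) [N.Normal] (hN₁ : N = H₁.normalCore) (hN₂ : N = H₂.normalCore) :
    (∀ q : G ⧸ N,
      Nat.card {x : G ⧸ N // x ∈ Subgroup.map (QuotientGroup.mk' N) H₁ ∧ IsConj q x}
        = Nat.card {x : G ⧸ N // x ∈ Subgroup.map (QuotientGroup.mk' N) H₂ ∧ IsConj q x})
    ∧ ((∃ a : G ⧸ N,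
          Subgroup.map (MulAut.conj a).toMonoidHom (Subgroup.map (QuotientGroup.mk' N) H₁)
            = Subgroup.map (QuotientGroup.mk' N) H₂)
        ↔ (∃ a : G, Subgroup.map (MulAut.conj a).toMonoidHom H₁ = H₂)) := by
  have hNH₁ : N ≤ H₁ := hN₁ ▸ Subgroup.normalCore_le H₁
  have hNH₂ : N ≤ H₂ := hN₂ ▸ Subgroup.normalCore_le H₂
  have hcomm : ∀ a : G,
      (QuotientGroup.mk' N).comp (MulAut.conj a).toMonoidHom
        = ((MulAut.conj (QuotientGroup.mk' N a)).toMonoidHom).comp (QuotientGroup.mk' N) := by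
    intro a
    ext x
    simp [MulAut.conj_apply]
  constructor
  · intro q
    have hP : ∀ a g : G, IsConj q (QuotientGroup.mk' N g)
        → IsConj q (QuotientGroup.mk' N (a * g * a⁻¹)) := by
      intro a g h
      refine h.trans ?_
      rw [map_mul, map_mul, map_inv]
      exact isConj_iff.mpr ⟨QuotientGroup.mk' N a, rfl⟩
    have hkey := key_count H₁ H₂ hrat (fun y => IsConj q (QuotientGroup.mk' N y)) hP
    rw [card_aux N H₁ hNH₁ q, card_aux N H₂ hNH₂ q] at hkey
    have hpos : 0 < Nat.card N := Nat.card_pos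
    exact Nat.eq_of_mul_eq_mul_right hpos hkey
  · constructor
    · rintro ⟨a', ha'⟩
      obtain ⟨a, rfl⟩ := QuotientGroup.mk'_surjective N a'
      refine ⟨a, ?_⟩
      have hmap : Subgroup.map (QuotientGroup.mk' N)
          (Subgroup.map (MulAut.conj a).toMonoidHom H₁)
            = Subgroup.map (QuotientGroup.mk' N) H₂ := by
        rw [Subgroup.map_map, hcomm a, ← Subgroup.map_map]
        exact ha'
      have hNle : N ≤ Subgroup.map (MulAut.conj a).toMonoidHom H₁ := by
        intro n hn
        refine ⟨a⁻¹ * n * a, hNH₁ ?_, ?_⟩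
        · simpa using Subgroup.Normal.conj_mem ‹N.Normal› n hn a⁻¹
        · simp [MulAut.conj_apply]
          group
      have := congrArg (Subgroup.comap (QuotientGroup.mk' N)) hmap
      rwa [Subgroup.comap_map_eq, Subgroup.comap_map_eq, QuotientGroup.ker_mk',
        sup_eq_left.mpr hNle, sup_eq_left.mpr hNH₂] at this
    · rintro ⟨a, ha⟩
      refine ⟨QuotientGroup.mk' N a, ?_⟩
      rw [Subgroup.map_map, ← hcomm a, ← Subgroup.map_map, ha]
end

section
/- Let p > 5 be prime and let σ = [[r,0],[0,1]] ∈ GL₂(𝔽_p) with r a nonsquare in 𝔽_p^×. Then for every g ∈ SL₂(𝔽_p) of order not divisible by p, σgσ⁻¹ is conjugate to g in SL₂(𝔽_p); that is, conjugation by σ fixes every conjugacy class of SL₂(𝔽_p) consisting of elements of order not divisible by p. -/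
open Matrix

/-- Cayley–Hamilton for 2×2 matrices, stated explicitly. -/
lemma cayley_fin_two {R : Type*} [CommRing R] (M : Matrix (Fin 2) (Fin 2) R) :
    M * M = (M 0 0 + M 1 1) • M - M.det • (1 : Matrix (Fin 2) (Fin 2) R) := by
  ext i j
  fin_cases i <;> fin_cases j <;>
    simp [Matrix.mul_apply, Fin.sum_univ_two, Matrix.det_fin_two, Matrix.one_apply] <;> ring

/-- Let `p > 5` be prime and let `σ = [[r,0],[0,1]] ∈ GL₂(𝔽_p)` with `r` a nonsquare in
`𝔽_p^×`.  Then for every `g ∈ SL₂(𝔽_p)` of order not divisible by `p`, the element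
`σgσ⁻¹` is conjugate to `g` in `SL₂(𝔽_p)`; i.e. conjugation by `σ` fixes every conjugacy
class of `SL₂(𝔽_p)` of elements of order prime to `p`. -/
theorem conj_by_nonsquare_fixes_prime_order_classes (p : ℕ) [Fact p.Prime] (hp : 5 < p)
    (r : ZMod p) (hr : ¬ IsSquare r) (hr0 : r ≠ 0)
    (σ g : Matrix.GeneralLinearGroup (Fin 2) (ZMod p))
    (hσ : (σ : Matrix (Fin 2) (Fin 2) (ZMod p)) = !![r, 0; 0, 1])
    (hg : (g : Matrix (Fin 2) (Fin 2) (ZMod p)).det = 1)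
    (hord : ¬ p ∣ orderOf g) :
    ∃ c : Matrix.GeneralLinearGroup (Fin 2) (ZMod p),
      (c : Matrix (Fin 2) (Fin 2) (ZMod p)).det = 1 ∧ c * g * c⁻¹ = σ * g * σ⁻¹ := by
  have hprime : p.Prime := Fact.out
  set M : Matrix (Fin 2) (Fin 2) (ZMod p) := (g : Matrix (Fin 2) (Fin 2) (ZMod p)) with hM
  set t : ZMod p := M 0 0 + M 1 1 with ht
  have hCH : M * M = t • M - (1 : Matrix (Fin 2) (Fin 2) (ZMod p)) := by
    rw [cayley_fin_two M, hg]; simp [ht]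
  have hcharP : CharP (ZMod p) p := ZMod.charP p
  have hp2 : p ≠ 2 := by omega
  -- helper : if g is central (±1) we are done with c = 1
  have hcentral : ∀ u : Matrix.GeneralLinearGroup (Fin 2) (ZMod p),
      (∀ x, u * x = x * u) → g = u → ∃ c : Matrix.GeneralLinearGroup (Fin 2) (ZMod p),
      (c : Matrix (Fin 2) (Fin 2) (ZMod p)).det = 1 ∧ c * g * c⁻¹ = σ * g * σ⁻¹ := by
    intro u hu hgu
    refine ⟨1, by simp, ?_⟩
    subst hgu
    have h1 : σ * g * σ⁻¹ = g := by
      rw [← hu σ, mul_assoc, mul_inv_cancel, mul_one]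
    rw [h1, one_mul, inv_one, mul_one]
  by_cases ht2 : t = 2
  · -- g is unipotent with trace 2: g^p = 1 so order 1, g = 1
    have hN : (M - 1) * (M - 1) = 0 := by
      have : (M - 1) * (M - 1) = M * M - (2 : ZMod p) • M + 1 := by
        have h2 : (2 : ZMod p) • M = M + M := two_smul _ M
        rw [h2]; noncomm_ring
      rw [this, hCH, ht2]; abel
    have hMp : M ^ p = 1 := by
      have hcomm : Commute (1 : Matrix (Fin 2) (Fin 2) (ZMod p)) (M - 1) := Commute.one_left _
      have : M ^ p = 1 ^ p + (M - 1) ^ p := by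
        rw [← add_pow_char_of_commute p hcomm]; congr 1; abel
      rw [this, one_pow]
      have hzero : (M - 1) ^ p = 0 := by
        have : (M - 1) ^ p = (M - 1) * (M - 1) * (M - 1) ^ (p - 2) := by
          rw [← pow_two, ← pow_add]
          congr 1
          omega
        rw [this, hN, zero_mul]
      rw [hzero, add_zero]
    have hgp : g ^ p = 1 := by
      ext1
      push_cast
      exact hMp
    have hdvd : orderOf g ∣ p := orderOf_dvd_of_pow_eq_one hgp
    have h1 : orderOf g = 1 := by
      rcases (Nat.Prime.eq_one_or_self_of_dvd hprime _ hdvd) with h | h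
      · exact h
      · exfalso; exact hord (by rw [h])
    exact hcentral 1 (by simp) (orderOf_eq_one_iff.mp h1)
  · by_cases htm2 : t = -2
    · -- trace -2: g^p = -1, order divides 2, g = -1
      have hN : (M + 1) * (M + 1) = 0 := by
        have : (M + 1) * (M + 1) = M * M + (2 : ZMod p) • M + 1 := by
          have h2 : (2 : ZMod p) • M = M + M := two_smul _ M
          rw [h2]; noncomm_ring
        rw [this, hCH, htm2]
        simp
        abel
      have hMp : M ^ p = -1 := by
        have hcomm : Commute (-1 : Matrix (Fin 2) (Fin 2) (ZMod p)) (M + 1) := by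
          exact (Commute.one_left _).neg_left
        have : M ^ p = (-1) ^ p + (M + 1) ^ p := by
          rw [← add_pow_char_of_commute p hcomm]; congr 1; abel
        have hzero : (M + 1) ^ p = 0 := by
          have : (M + 1) ^ p = (M + 1) * (M + 1) * (M + 1) ^ (p - 2) := by
            rw [← pow_two, ← pow_add]
            congr 1
            omega
          rw [this, hN, zero_mul]
        rw [this, hzero, add_zero, Odd.neg_one_pow (hprime.odd_of_ne_two hp2)]
      have hg2p : g ^ (2 * p) = 1 := by
        ext1
        push_cast
        rw [mul_comm, pow_mul, hMp]
        simp
      have hdvd : orderOf g ∣ 2 * p := orderOf_dvd_of_pow_eq_one hg2p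
      have hcop : Nat.Coprime (orderOf g) p :=
        ((Nat.Prime.coprime_iff_not_dvd hprime).mpr hord).symm
      have hdvd2 : orderOf g ∣ 2 := hcop.dvd_of_dvd_mul_right hdvd
      have hg2 : g ^ 2 = 1 := orderOf_dvd_iff_pow_eq_one.mp hdvd2
      have hM2 : M * M = 1 := by
        have := congrArg (Units.val) hg2
        push_cast at this
        rw [pow_two] at this
        exact this
      have hMeq : M = -1 := by
        have h2ne : (2 : ZMod p) ≠ 0 := by
          intro h
          have h2 : ((2 : ℕ) : ZMod p) = 0 := by push_cast; exact h
          rw [ZMod.natCast_eq_zero_iff] at h2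
          have := Nat.le_of_dvd (by norm_num) h2
          omega
        have h' := hCH
        rw [hM2, htm2] at h'
        have h'' : (-2 : ZMod p) • M = 1 + 1 := sub_eq_iff_eq_add.mp h'.symm
        have hn2 : (-2 : ZMod p) ≠ 0 := neg_ne_zero.mpr h2ne
        have hM' : M = (-2 : ZMod p)⁻¹ • (1 + 1 : Matrix (Fin 2) (Fin 2) (ZMod p)) := by
          rw [← h'', smul_smul, inv_mul_cancel₀ hn2, one_smul]
        have h12 : (1 + 1 : Matrix (Fin 2) (Fin 2) (ZMod p)) = (2 : ZMod p) • 1 :=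
          (two_smul (ZMod p) (1 : Matrix (Fin 2) (Fin 2) (ZMod p))).symm
        have hinv : ((-2 : ZMod p)⁻¹ * 2) = -1 := by
          rw [inv_neg, neg_mul, inv_mul_cancel₀ h2ne]
        rw [hM', h12, smul_smul, hinv]
        simp
      refine hcentral (-1) (by intro x; simp [mul_comm]) ?_
      ext1
      push_cast
      exact hMeq
    · -- regular semisimple case: find z in the centralizer of g of determinant r⁻¹
      have h2ne : (2 : ZMod p) ≠ 0 := by
        intro h
        have h2 : ((2 : ℕ) : ZMod p) = 0 := by push_cast; exact h
        rw [ZMod.natCast_eq_zero_iff] at h2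
        have := Nat.le_of_dvd (by norm_num) h2
        omega
      have h2inv : (2 : ZMod p) * (2 : ZMod p)⁻¹ = 1 := mul_inv_cancel₀ h2ne
      set i2 : ZMod p := (2 : ZMod p)⁻¹ with hi2
      clear_value i2
      clear_value t
      set d : ZMod p := 1 - i2 * i2 * t ^ 2 with hd
      clear_value d
      have hdne : d ≠ 0 := by
        intro h
        rw [hd] at h
        have ht4 : t ^ 2 = 4 := by
          linear_combination (-4 : ZMod p) * h - (1 + 2 * i2) * t ^ 2 * h2inv
        have : (t - 2) * (t + 2) = 0 := by linear_combination ht4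
        rcases mul_eq_zero.mp this with h' | h'
        · exact ht2 (by linear_combination h')
        · exact htm2 (by linear_combination h')
      have hcard : Fintype.card (ZMod p) % 2 = 1 := by
        rw [ZMod.card]
        exact Nat.odd_iff.mp (hprime.odd_of_ne_two hp2)
      obtain ⟨x, y, hxy⟩ := FiniteField.exists_root_sum_quadratic
        (f := Polynomial.X ^ 2 - Polynomial.C r⁻¹) (g := Polynomial.C d * Polynomial.X ^ 2)
        (Polynomial.degree_X_pow_sub_C (by norm_num) _)
        (by rw [Polynomial.degree_C_mul hdne, Polynomial.degree_X_pow]; rfl)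
        hcard
      simp only [Polynomial.eval_add, Polynomial.eval_sub, Polynomial.eval_mul,
        Polynomial.eval_pow, Polynomial.eval_X, Polynomial.eval_C] at hxy
      -- hxy : x ^ 2 - r⁻¹ + d * y ^ 2 = 0
      set a : ZMod p := x - i2 * t * y with ha
      clear_value a
      set Z : Matrix (Fin 2) (Fin 2) (ZMod p) := a • 1 + y • M with hZ
      have hdet2 : M 0 0 * M 1 1 - M 0 1 * M 1 0 = 1 := by
        rw [← Matrix.det_fin_two]; exact hg
      have hdetZ : Z.det = r⁻¹ := by
        rw [Matrix.det_fin_two]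
        simp only [hZ, Matrix.add_apply, Matrix.smul_apply, smul_eq_mul, Matrix.one_apply_eq,
          Matrix.one_apply_ne (by norm_num : (0 : Fin 2) ≠ 1),
          Matrix.one_apply_ne (by norm_num : (1 : Fin 2) ≠ 0)]
        have expand : (a * 1 + y * M 0 0) * (a * 1 + y * M 1 1) - (a * 0 + y * M 0 1) *
            (a * 0 + y * M 1 0) = a ^ 2 + a * y * t + y ^ 2 := by
          rw [ht]
          linear_combination y ^ 2 * hdet2
        rw [hd] at hxy
        rw [expand, ha]
        linear_combination hxy + (i2 * t ^ 2 * y ^ 2 - t * x * y) * h2inv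
      have hdetZne : Z.det ≠ 0 := by rw [hdetZ]; exact inv_ne_zero hr0
      set z : Matrix.GeneralLinearGroup (Fin 2) (ZMod p) :=
        Matrix.GeneralLinearGroup.mkOfDetNeZero Z hdetZne with hz
      have hzval : (z : Matrix (Fin 2) (Fin 2) (ZMod p)) = Z := rfl
      have hzg : z * g = g * z := by
        ext1
        push_cast
        rw [hzval, ← hM, hZ]
        simp only [add_mul, mul_add, smul_mul_assoc, Matrix.mul_smul, Matrix.smul_mul,
          mul_smul_comm, one_mul, mul_one]
      refine ⟨σ * z, ?_, ?_⟩
      · have : ((σ * z : Matrix.GeneralLinearGroup (Fin 2) (ZMod p)) :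
            Matrix (Fin 2) (Fin 2) (ZMod p)) = (σ : Matrix (Fin 2) (Fin 2) (ZMod p)) * Z := by
          push_cast; rw [hzval]
        rw [this, Matrix.det_mul, hσ, hdetZ]
        simp [Matrix.det_fin_two_of]
        exact mul_inv_cancel₀ hr0
      · have hzgz : z * g * z⁻¹ = g := by
          rw [hzg, mul_assoc, mul_inv_cancel, mul_one]
        calc σ * z * g * (σ * z)⁻¹ = σ * (z * g * z⁻¹) * σ⁻¹ := by
              rw [_root_.mul_inv_rev]; group
          _ = σ * g * σ⁻¹ := by rw [hzgz]
end

section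
/- Let G be a finite group, H₁, H₂ ≤ G subgroups of the same index n, R an integral domain, and M ∈ Hom_{R[G]}(R[H₁\G], R[H₂\G]) with det M ∈ R^×. Then for any R[G]-module A, M induces an R-module isomorphism from A^{H₁} to A^{H₂}, where A^{H} denotes the submodule of H-fixed points. -/
/-- The `R`-submodule `A^H` of points of `A` fixed by a subgroup `H` of `G` acting
`R`-linearly on `A` via `τ`. -/
def fixedSubmodule {G R A : Type*} [Group G] [CommRing R] [AddCommGroup A] [Module R A]
    (τ : G → (A →ₗ[R] A)) (H : Subgroup G) : Submodule R A where
  carrier := {a | ∀ h ∈ H, τ h a = a}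
  add_mem' := by
    intro a b ha hb h hh
    rw [map_add, ha h hh, hb h hh]
  zero_mem' := by
    intro h hh
    rw [map_zero]
  smul_mem' := by
    intro c a ha h hh
    rw [map_smul, ha h hh]

section Aux

variable {G R A : Type*} [Group G] [CommRing R] [AddCommGroup A] [Module R A]

/-- Abbreviation for the canonical map `G → H\G`. -/
abbrev mkQ {G : Type*} [Group G] (H : Subgroup G) (g : G) : RQ H :=
  @Quotient.mk'' _ (QuotientGroup.rightRel H) g

lemma rmul_mkQ (H : Subgroup G) (k g : G) : rmul H k (mkQ H g) = mkQ H (g * k) :=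
  Quotient.map'_mk'' _ _ _

lemma out_mkQ_rel (H : Subgroup G) (g : G) : (mkQ H g).out * g⁻¹ ∈ H := by
  have h : mkQ H (mkQ H g).out = mkQ H g := Quotient.out_eq' _
  rw [Quotient.eq'', QuotientGroup.rightRel_apply] at h
  simpa [mul_inv_rev] using H.inv_mem h

variable (τ : G → (A →ₗ[R] A))

lemma tau_congr (hτm : ∀ g g' : G, τ (g * g') = τ g' ∘ₗ τ g)
    {H : Subgroup G} {a : A} (ha : ∀ h ∈ H, τ h a = a)
    {x y : G} (hxy : y * x⁻¹ ∈ H) : τ y a = τ x a := by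
  have hy : y = (y * x⁻¹) * x := by group
  rw [hy, hτm, LinearMap.comp_apply, ha _ hxy]

lemma tau_out (hτm : ∀ g g' : G, τ (g * g') = τ g' ∘ₗ τ g)
    {H : Subgroup G} {a : A} (ha : ∀ h ∈ H, τ h a = a) (g : G) :
    τ (mkQ H g).out a = τ g a :=
  tau_congr τ hτm ha (out_mkQ_rel H g)

/-- The evaluation map `R[H\G] → A` attached to a point `a : A`, sending a coset to
`τ` of a representative applied to `a`. -/
noncomputable def evA (H : Subgroup G) (a : A) : (RQ H →₀ R) →ₗ[R] A :=
  Finsupp.linearCombination R (fun q : RQ H => τ q.out a)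

lemma evA_apply (H : Subgroup G) (a : A) (v : RQ H →₀ R) :
    evA τ H a v = v.sum fun q c => c • τ q.out a := by
  rw [evA, Finsupp.linearCombination_apply]

lemma evA_add (H : Subgroup G) (a b : A) (v : RQ H →₀ R) :
    evA τ H (a + b) v = evA τ H a v + evA τ H b v := by
  simp only [evA_apply, map_add, smul_add]
  exact Finsupp.sum_add

lemma evA_smul (H : Subgroup G) (r : R) (a : A) (v : RQ H →₀ R) :
    evA τ H (r • a) v = r • evA τ H a v := by
  simp only [evA_apply, map_smul, Finsupp.smul_sum]
  exact Finsupp.sum_congr fun q _ => smul_comm _ _ _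

lemma evA_equivariant (hτm : ∀ g g' : G, τ (g * g') = τ g' ∘ₗ τ g)
    {H : Subgroup G} {a : A} (ha : ∀ h ∈ H, τ h a = a)
    (g : G) (v : RQ H →₀ R) :
    evA τ H a (Finsupp.mapDomain (rmul H g) v) = τ g (evA τ H a v) := by
  rw [evA_apply, evA_apply,
    Finsupp.sum_mapDomain_index (by simp) (fun q c₁ c₂ => by rw [add_smul]),
    map_finsuppSum]
  refine Finsupp.sum_congr fun q _ => ?_
  rw [map_smul]
  congr 1
  have h1 : τ (rmul H g q).out a = τ (q.out * g) a := by
    apply tau_congr τ hτm ha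
    have h2 : rmul H g q = mkQ H (q.out * g) := by
      conv_lhs => rw [← Quotient.out_eq' q]
      exact rmul_mkQ H g q.out
    rw [h2]
    exact out_mkQ_rel H _
  rw [h1, hτm, LinearMap.comp_apply]

lemma reconstruct {H : Subgroup G} (ψ : (RQ H →₀ R) →ₗ[R] A)
    (hψ : ∀ (g : G) (v : RQ H →₀ R),
      ψ (Finsupp.mapDomain (rmul H g) v) = τ g (ψ v)) (v : RQ H →₀ R) :
    ψ v = evA τ H (ψ (Finsupp.single (mkQ H 1) 1)) v := by
  conv_lhs => rw [← Finsupp.sum_single v, map_finsuppSum]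
  rw [evA_apply]
  refine Finsupp.sum_congr fun q _ => ?_
  have h1 : Finsupp.single q (v q) = v q • Finsupp.single q (1 : R) := by simp
  rw [h1, map_smul]
  congr 1
  have h2 : Finsupp.single q (1 : R) =
      Finsupp.mapDomain (rmul H q.out) (Finsupp.single (mkQ H 1) 1) := by
    rw [Finsupp.mapDomain_single, rmul_mkQ, one_mul]
    exact congrArg (fun x => Finsupp.single x (1 : R)) (Quotient.out_eq' q).symm
  rw [h2, hψ]

lemma fixed_of_equivariant {H : Subgroup G} (ψ : (RQ H →₀ R) →ₗ[R] A)
    (hψ : ∀ (g : G) (v : RQ H →₀ R),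
      ψ (Finsupp.mapDomain (rmul H g) v) = τ g (ψ v)) :
    ∀ h ∈ H, τ h (ψ (Finsupp.single (mkQ H 1) 1)) = ψ (Finsupp.single (mkQ H 1) 1) := by
  intro h hh
  rw [← hψ h, Finsupp.mapDomain_single, rmul_mkQ, one_mul]
  have h1 : mkQ H h = mkQ H 1 := by
    apply Quotient.sound'
    rw [QuotientGroup.rightRel_apply]
    simpa using H.inv_mem hh
  rw [h1]

lemma evA_delta (hτ1 : τ 1 = LinearMap.id)
    (hτm : ∀ g g' : G, τ (g * g') = τ g' ∘ₗ τ g)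
    {H : Subgroup G} {a : A} (ha : ∀ h ∈ H, τ h a = a) :
    evA τ H a (Finsupp.single (mkQ H 1) 1) = a := by
  rw [evA, Finsupp.linearCombination_single, one_smul, tau_out τ hτm ha 1, hτ1]
  rfl

end Aux

/-- Let `G` be a finite group, `H₁, H₂ ≤ G` of the same index, `R` an integral domain, and
`M ∈ Hom_{R[G]}(R[H₁\G], R[H₂\G])` with `det M ∈ R^×` (determinant taken with respect to
the coset bases).  Then for every `R[G]`-module `A` (an `R`-module with `R`-linear right
`G`-action `τ`), `M` induces an `R`-module isomorphism `A^{H₁} ≃ A^{H₂}`. -/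
theorem fixed_points_iso_of_unit_det {G : Type} [Group G] [Fintype G] (H₁ H₂ : Subgroup G)
    {R : Type} [CommRing R] [IsDomain R]
    [Fintype (RQ H₁)] [DecidableEq (RQ H₁)]
    (A : Type) [AddCommGroup A] [Module R A]
    (τ : G → (A →ₗ[R] A)) (hτ1 : τ 1 = LinearMap.id)
    (hτm : ∀ g g' : G, τ (g * g') = τ g' ∘ₗ τ g)
    (M : (RQ H₁ →₀ R) →ₗ[R] (RQ H₂ →₀ R))
    (hM : ∀ (g : G) (v : RQ H₁ →₀ R),
      M (Finsupp.mapDomain (rmul H₁ g) v) = Finsupp.mapDomain (rmul H₂ g) (M v))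
    (e : RQ H₁ ≃ RQ H₂)
    (hdet : IsUnit (LinearMap.toMatrix Finsupp.basisSingleOne
      (Finsupp.basisSingleOne.reindex e.symm) M).det) :
    Nonempty (fixedSubmodule τ H₁ ≃ₗ[R] fixedSubmodule τ H₂) := by
  classical
  set δ₁ : RQ H₁ →₀ R := Finsupp.single (mkQ H₁ 1) 1 with hδ₁
  set δ₂ : RQ H₂ →₀ R := Finsupp.single (mkQ H₂ 1) 1 with hδ₂
  let Meq : (RQ H₁ →₀ R) ≃ₗ[R] (RQ H₂ →₀ R) := LinearEquiv.ofIsUnitDet hdet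
  have hMeq : ∀ v, Meq v = M v := fun v => LinearEquiv.ofIsUnitDet_apply hdet v
  let N : (RQ H₂ →₀ R) →ₗ[R] (RQ H₁ →₀ R) := Meq.symm.toLinearMap
  have hMN : ∀ w, M (N w) = w := fun w => by
    rw [← hMeq]; exact Meq.apply_symm_apply w
  have hNM : ∀ v, N (M v) = v := fun v => by
    show Meq.symm (M v) = v
    rw [← hMeq]; exact Meq.symm_apply_apply v
  have hMinj : Function.Injective M := fun x y hxy => by
    rw [← hNM x, ← hNM y, hxy]
  have hN : ∀ (g : G) (w : RQ H₂ →₀ R),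
      N (Finsupp.mapDomain (rmul H₂ g) w) = Finsupp.mapDomain (rmul H₁ g) (N w) := by
    intro g w
    apply hMinj
    rw [hMN, hM, hMN]
  -- equivariant maps ψ a := evA τ H₂ a ∘ M  (for a fixed by H₂)
  have hψ_equiv : ∀ (a : A), (∀ h ∈ H₂, τ h a = a) →
      ∀ (g : G) (v : RQ H₁ →₀ R),
        evA τ H₂ a (M (Finsupp.mapDomain (rmul H₁ g) v)) = τ g (evA τ H₂ a (M v)) := by
    intro a ha g v
    rw [hM, evA_equivariant τ hτm ha]
  have hφ_equiv : ∀ (a : A), (∀ h ∈ H₁, τ h a = a) →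
      ∀ (g : G) (w : RQ H₂ →₀ R),
        evA τ H₁ a (N (Finsupp.mapDomain (rmul H₂ g) w)) = τ g (evA τ H₁ a (N w)) := by
    intro a ha g w
    rw [hN, evA_equivariant τ hτm ha]
  -- the two maps between fixed submodules
  let Fm : fixedSubmodule τ H₂ →ₗ[R] fixedSubmodule τ H₁ :=
    { toFun := fun a => ⟨evA τ H₂ a.1 (M δ₁),
        fixed_of_equivariant τ ((evA τ H₂ a.1).comp M) (hψ_equiv a.1 a.2)⟩
      map_add' := fun a b => Subtype.ext (evA_add τ H₂ a.1 b.1 (M δ₁))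
      map_smul' := fun r a => Subtype.ext (evA_smul τ H₂ r a.1 (M δ₁)) }
  let Gm : fixedSubmodule τ H₁ →ₗ[R] fixedSubmodule τ H₂ :=
    { toFun := fun a => ⟨evA τ H₁ a.1 (N δ₂),
        fixed_of_equivariant τ ((evA τ H₁ a.1).comp N) (hφ_equiv a.1 a.2)⟩
      map_add' := fun a b => Subtype.ext (evA_add τ H₁ a.1 b.1 (N δ₂))
      map_smul' := fun r a => Subtype.ext (evA_smul τ H₁ r a.1 (N δ₂)) }
  refine ⟨LinearEquiv.ofLinear Gm Fm ?_ ?_⟩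
  · -- Gm ∘ Fm = id on fixed H₂
    ext a
    have key := reconstruct τ ((evA τ H₂ a.1).comp M) (hψ_equiv a.1 a.2) (N δ₂)
    simp only [LinearMap.comp_apply] at key
    show evA τ H₁ (evA τ H₂ a.1 (M δ₁)) (N δ₂) = a.1
    rw [← key, hMN, evA_delta τ hτ1 hτm a.2]
  · -- Fm ∘ Gm = id on fixed H₁
    ext a
    have key := reconstruct τ ((evA τ H₁ a.1).comp N) (hφ_equiv a.1 a.2) (M δ₁)
    simp only [LinearMap.comp_apply] at key
    show evA τ H₂ (evA τ H₁ a.1 (N δ₂)) (M δ₁) = a.1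
    rw [← key, hNM, evA_delta τ hτ1 hτm a.2]
end

section
/- Let G be a finite group and H₁, H₂ ≤ G. If the 𝔽_p-permutation modules 𝔽_p[H₁\G] and 𝔽_p[H₂\G] are isomorphic as 𝔽_p[G]-modules, then there exists M ∈ Hom_{ℤ[G]}(ℤ[H₁\G], ℤ[H₂\G]) whose determinant is not divisible by p. -/
lemma rmul_mk {G : Type*} [Group G] (H : Subgroup G) (k a : G) :
    rmul H k (Quotient.mk'' a) = Quotient.mk'' (a * k) := rfl

/-- `rmul` as an equivalence. -/
def rmulEquiv {G : Type*} [Group G] (H : Subgroup G) (k : G) : RQ H ≃ RQ H where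
  toFun := rmul H k
  invFun := rmul H k⁻¹
  left_inv x := by
    induction x using Quotient.inductionOn' with
    | h a => simp [rmul_mk, mul_assoc]
  right_inv x := by
    induction x using Quotient.inductionOn' with
    | h a => simp [rmul_mk, mul_assoc]

lemma mapRange_equivMapDomain {α β : Type*} {M N : Type*} [Zero M] [Zero N]
    (f : α ≃ β) (h : M → N) (h0 : h 0 = 0) (v : α →₀ M) :
    Finsupp.mapRange h h0 (Finsupp.equivMapDomain f v) =
      Finsupp.equivMapDomain f (Finsupp.mapRange h h0 v) := by
  ext b
  simp [Finsupp.equivMapDomain_apply, Finsupp.mapRange_apply]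

/-- If the permutation modules `𝔽_p[H₁\G]` and `𝔽_p[H₂\G]` are isomorphic as
`𝔽_p[G]`-modules (a `𝔽_p`-linear isomorphism commuting with the `G`-action), then there is
`M ∈ Hom_{ℤ[G]}(ℤ[H₁\G], ℤ[H₂\G])` whose determinant (with respect to the coset bases,
`[G:H₁] = [G:H₂]` being witnessed by the bijection `e`) is not divisible by `p`. -/
theorem exists_integral_hom_det_not_dvd (p : ℕ) [Fact p.Prime]
    {G : Type} [Group G] [Fintype G] (H₁ H₂ : Subgroup G)
    [Fintype (RQ H₁)] [DecidableEq (RQ H₁)]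
    (e : RQ H₁ ≃ RQ H₂)
    (hiso : ∃ E : (RQ H₁ →₀ ZMod p) ≃ₗ[ZMod p] (RQ H₂ →₀ ZMod p),
      ∀ (g : G) (v : RQ H₁ →₀ ZMod p),
        E (Finsupp.mapDomain (rmul H₁ g) v) = Finsupp.mapDomain (rmul H₂ g) (E v)) :
    ∃ M : (RQ H₁ →₀ ℤ) →ₗ[ℤ] (RQ H₂ →₀ ℤ),
      (∀ (g : G) (v : RQ H₁ →₀ ℤ),
        M (Finsupp.mapDomain (rmul H₁ g) v) = Finsupp.mapDomain (rmul H₂ g) (M v)) ∧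
      ¬ (p : ℤ) ∣ (LinearMap.toMatrix Finsupp.basisSingleOne
        (Finsupp.basisSingleOne.reindex e.symm) M).det := by
  obtain ⟨E, hE⟩ := hiso
  -- integral lift of the image of a basis vector
  set w : RQ H₁ → (RQ H₂ →₀ ℤ) := fun j =>
    Finsupp.mapRange (fun x : ZMod p => (x.val : ℤ)) (by simp) (E (Finsupp.single j 1)) with hw
  set M : (RQ H₁ →₀ ℤ) →ₗ[ℤ] (RQ H₂ →₀ ℤ) := Finsupp.linearCombination ℤ w with hM
  have hMsingle : ∀ j, M (Finsupp.single j 1) = w j := by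
    intro j
    simp [hM, Finsupp.linearCombination_single]
  -- key: the lift is equivariant
  have hwe : ∀ (g : G) (j : RQ H₁),
      w (rmul H₁ g j) = Finsupp.mapDomain (rmul H₂ g) (w j) := by
    intro g j
    have h1 : Finsupp.single (rmul H₁ g j) (1 : ZMod p) =
        Finsupp.mapDomain (rmul H₁ g) (Finsupp.single j 1) := by
      rw [Finsupp.mapDomain_single]
    have h2 : E (Finsupp.single (rmul H₁ g j) 1) =
        Finsupp.mapDomain (rmul H₂ g) (E (Finsupp.single j 1)) := by
      rw [h1, hE]
    have hco : rmul H₂ g = ⇑(rmulEquiv H₂ g) := rfl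
    have h3 : Finsupp.mapDomain (rmul H₂ g) (E (Finsupp.single j 1)) =
        Finsupp.equivMapDomain (rmulEquiv H₂ g) (E (Finsupp.single j 1)) := by
      rw [hco]; exact (Finsupp.equivMapDomain_eq_mapDomain _ _).symm
    have h4 : Finsupp.mapDomain (rmul H₂ g) (w j) =
        Finsupp.equivMapDomain (rmulEquiv H₂ g) (w j) := by
      rw [hco]; exact (Finsupp.equivMapDomain_eq_mapDomain _ _).symm
    rw [hw]
    simp only []
    rw [h2, h3, h4, mapRange_equivMapDomain]
  refine ⟨M, ?_, ?_⟩
  · intro g v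
    induction v using Finsupp.induction_linear with
    | zero => simp
    | add f₁ f₂ hf₁ hf₂ =>
        rw [Finsupp.mapDomain_add, map_add, hf₁, hf₂, map_add, Finsupp.mapDomain_add]
    | single j c =>
        rw [Finsupp.mapDomain_single]
        have : (Finsupp.single (rmul H₁ g j) c : RQ H₁ →₀ ℤ)
            = c • Finsupp.single (rmul H₁ g j) 1 := by simp
        rw [this, map_smul, hMsingle]
        have : (Finsupp.single j c : RQ H₁ →₀ ℤ) = c • Finsupp.single j 1 := by simp
        rw [this, map_smul, hMsingle, Finsupp.mapDomain_smul, hwe]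
  · -- determinant part
    haveI : Fintype (RQ H₂) := Fintype.ofEquiv _ e
    set T : Matrix (RQ H₁) (RQ H₁) ℤ :=
      LinearMap.toMatrix Finsupp.basisSingleOne (Finsupp.basisSingleOne.reindex e.symm) M
      with hT
    set A : Matrix (RQ H₁) (RQ H₁) (ZMod p) :=
      LinearMap.toMatrix Finsupp.basisSingleOne (Finsupp.basisSingleOne.reindex e.symm)
        (E : (RQ H₁ →₀ ZMod p) →ₗ[ZMod p] (RQ H₂ →₀ ZMod p)) with hA
    have hTA : T.map (Int.cast : ℤ → ZMod p) = A := by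
      ext i j
      have hTij : T i j = ((E (Finsupp.single j 1)) (e i)).val := by
        rw [hT, LinearMap.toMatrix_apply]
        simp only [Finsupp.coe_basisSingleOne, hMsingle, Module.Basis.repr_reindex_apply,
          Equiv.symm_symm, hw]
        simp [Finsupp.basisSingleOne]
      have hAij : A i j = (E (Finsupp.single j 1)) (e i) := by
        rw [hA, LinearMap.toMatrix_apply]
        simp only [Finsupp.coe_basisSingleOne, Module.Basis.repr_reindex_apply, Equiv.symm_symm]
        simp [Finsupp.basisSingleOne]
      rw [Matrix.map_apply, hTij, hAij]
      push_cast
      simp [ZMod.natCast_val, ZMod.cast_id]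
    have hAunit : IsUnit A.det := by
      have hcomp : A * LinearMap.toMatrix (Finsupp.basisSingleOne.reindex e.symm)
          Finsupp.basisSingleOne
          (E.symm : (RQ H₂ →₀ ZMod p) →ₗ[ZMod p] (RQ H₁ →₀ ZMod p)) = 1 := by
        rw [hA, ← LinearMap.toMatrix_comp, ← LinearMap.toMatrix_id
          (Finsupp.basisSingleOne.reindex e.symm)]
        congr 1
        ext v
        simp
      exact IsUnit.of_mul_eq_one _ (by
        rw [← Matrix.det_mul, hcomp, Matrix.det_one])
    intro hdvd
    have h0 : ((T.det : ℤ) : ZMod p) = 0 := by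
      obtain ⟨c, hc⟩ := hdvd
      rw [hc]
      push_cast
      simp
    have h1 : ((T.det : ℤ) : ZMod p) = A.det := by
      rw [show ((T.det : ℤ) : ZMod p) = (Int.castRingHom (ZMod p)) T.det from rfl,
        RingHom.map_det, RingHom.mapMatrix_apply,
        show ⇑(Int.castRingHom (ZMod p)) = (Int.cast : ℤ → ZMod p) from rfl, hTA]
    rw [h1] at h0
    exact hAunit.ne_zero h0
end
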